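/- arXiv:2409.12146 — 11 statements merged into one kernel-verified Lean document; each statement's English description precedes it below -/
import Mathlib

section
/- Fix integers m > 0 and σ > 1. For strings X, X' over alphabet [0..σ) of length at most m, define Int(X) as the integer whose base-σ representation (of total length 2m) is obtained by appending 2m - 2|X| zeros and then |X| copies of the digit σ-1 to X. Then X ≺ X' in lexicographic order implies Int(X) < Int(X'). -/
/-!
Reading `X` big-endian as `v(X)`, the encoding is `Int(X) = σ^(2m-|X|) v(X) + σ^|X| - 1`.
After a common first letter the comparison recurses on the tails, with one digit fewer and
one more trailing `σ - 1`; so we generalise to `σ^(N-|X|) v(X) + σ^(|X|+e) - 1` and induct on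
the lexicographic order. A proper prefix loses because its trailing block is shorter, and at
the first differing letter the smaller string loses because everything after that letter
is worth less than one unit of it; this needs the free room `2|X| + e ≤ N`.
-/

/-- `IntEnc m σ X`: the integer in `[0..σ^(2m))` whose base-`σ` digit string
(most significant digit first, of total length `2m`) is
`X · 0^(2m-2|X|) · (σ-1)^(|X|)`. (`Nat.ofDigits` is little-endian, hence the `reverse`.) -/
def IntEnc (m σ : ℕ) (X : List ℕ) : ℕ :=
  Nat.ofDigits σ ((X ++ List.replicate (2 * m - 2 * X.length) 0
      ++ List.replicate X.length (σ - 1)).reverse)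

open Nat

theorem Nat.ofDigits_replicate_pred (σ n : ℕ) :
    ofDigits σ (List.replicate n (σ - 1)) = σ ^ n - 1 := by
  induction n with
  | zero => simp
  | succ n ih =>
    rw [List.replicate_succ, ofDigits_cons, ih]
    rcases σ.eq_zero_or_pos with rfl | hσ
    · simp
    · have : 1 ≤ σ ^ n := one_le_pow _ _ hσ
      zify [this, one_le_pow (n + 1) σ hσ, hσ]
      ring

/-- The value of the digit string `X · 0^(N-2|X|-e) · (σ-1)^(|X|+e)`: what remains of an encoding
of length `N + e` once `e` leading letters shared by both sides of a comparison are consumed. -/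
def tailEnc (σ N e : ℕ) (X : List ℕ) : ℕ :=
  σ ^ (N - X.length) * ofDigits σ X.reverse + (σ ^ (X.length + e) - 1)

section tailEnc

variable {σ N e : ℕ}

@[simp]
theorem tailEnc_nil : tailEnc σ N e [] = σ ^ e - 1 := by
  simp [tailEnc]

theorem tailEnc_cons (a : ℕ) {T : List ℕ} (hT : T.length < N) :
    tailEnc σ N e (a :: T) = σ ^ (N - 1) * a + tailEnc σ (N - 1) (e + 1) T := by
  have hN : σ ^ (N - 1) = σ ^ (N - (T.length + 1)) * σ ^ T.length := by
    rw [← pow_add]; congr 1; omega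
  rw [tailEnc, tailEnc, ofDigits_reverse_cons, List.length_cons, hN,
    show N - 1 - T.length = N - (T.length + 1) by omega,
    show T.length + 1 + e = T.length + (e + 1) by omega]
  ring

theorem pow_sub_one_le_tailEnc (X : List ℕ) : σ ^ (X.length + e) - 1 ≤ tailEnc σ N e X :=
  le_add_self

theorem tailEnc_lt_pow (hσ : 1 < σ) {X : List ℕ} (hX : 2 * X.length + e ≤ N)
    (hXd : ∀ c ∈ X, c < σ) : tailEnc σ N e X < σ ^ N := by
  have hv : ofDigits σ X.reverse + 1 ≤ σ ^ X.length := by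
    simpa using ofDigits_lt_base_pow_length (l := X.reverse) hσ (by simpa using hXd)
  have htail : σ ^ (X.length + e) ≤ σ ^ (N - X.length) :=
    pow_le_pow_right₀ hσ.le (by omega)
  have hpos : 0 < σ ^ (X.length + e) := pow_pos (by omega) _
  calc tailEnc σ N e X
      < σ ^ (N - X.length) * ofDigits σ X.reverse + σ ^ (N - X.length) := by
        unfold tailEnc; omega
    _ = σ ^ (N - X.length) * (ofDigits σ X.reverse + 1) := by ring
    _ ≤ σ ^ (N - X.length) * σ ^ X.length := Nat.mul_le_mul_left _ hv
    _ = σ ^ N := by rw [← pow_add, Nat.sub_add_cancel (by omega)]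

theorem tailEnc_lt_of_lex (hσ : 1 < σ) {X X' : List ℕ}
    (hX : 2 * X.length + e ≤ N) (hX' : X'.length ≤ N) (hXd : ∀ c ∈ X, c < σ)
    (hlt : List.Lex (· < ·) X X') : tailEnc σ N e X < tailEnc σ N e X' := by
  induction hlt generalizing N e with
  | @nil a T =>
    have hpow : σ ^ e < σ ^ ((a :: T).length + e) := Nat.pow_lt_pow_right hσ (by simp)
    rw [tailEnc_nil]
    exact (Nat.sub_lt_sub_right (one_le_pow _ _ (by omega)) hpow).trans_le
      (pow_sub_one_le_tailEnc _)
  | cons _ ih =>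
    simp only [List.length_cons] at hX hX'
    rw [tailEnc_cons _ (by omega), tailEnc_cons _ (by omega)]
    exact Nat.add_lt_add_left (ih (by omega) (by omega) fun c hc => hXd c (.tail _ hc)) _
  | @rel a T b T' hab =>
    simp only [List.length_cons] at hX hX'
    rw [tailEnc_cons _ (by omega), tailEnc_cons _ (by omega)]
    calc σ ^ (N - 1) * a + tailEnc σ (N - 1) (e + 1) T
        < σ ^ (N - 1) * a + σ ^ (N - 1) :=
          Nat.add_lt_add_left (tailEnc_lt_pow hσ (by omega) fun c hc => hXd c (.tail _ hc)) _
      _ = σ ^ (N - 1) * (a + 1) := by ring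
      _ ≤ σ ^ (N - 1) * b := Nat.mul_le_mul_left _ hab
      _ ≤ σ ^ (N - 1) * b + tailEnc σ (N - 1) (e + 1) T' := le_add_right le_rfl

end tailEnc

theorem intEnc_eq_tailEnc {m : ℕ} (σ : ℕ) {X : List ℕ} (hX : X.length ≤ m) :
    IntEnc m σ X = tailEnc σ (2 * m) 0 X := by
  rw [IntEnc, tailEnc, List.append_assoc, List.reverse_append, List.reverse_append,
    List.reverse_replicate, List.reverse_replicate, ofDigits_append, ofDigits_append,
    ofDigits_replicate_pred, ofDigits_replicate_zero]
  simp only [List.length_replicate, List.length_append, add_zero]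
  rw [show X.length + (2 * m - 2 * X.length) = 2 * m - X.length by omega]
  ring

theorem intEnc_strictMono_general (m σ : ℕ) (hσ : 1 < σ) (X X' : List ℕ)
    (hX : X.length ≤ m) (hX' : X'.length ≤ m)
    (hXd : ∀ c ∈ X, c < σ)
    (hlt : List.Lex (· < ·) X X') :
    IntEnc m σ X < IntEnc m σ X' := by
  rw [intEnc_eq_tailEnc σ hX, intEnc_eq_tailEnc σ hX']
  exact tailEnc_lt_of_lex hσ (by omega) (by omega) hXd hlt

/-- For strings `X, X'` over the alphabet `[0..σ)` of length at most `m`,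
strict lexicographic order `X ≺ X'` (where a proper prefix is smaller) implies
`IntEnc m σ X < IntEnc m σ X'`. -/
theorem intEnc_strictMono (m σ : ℕ) (hm : 0 < m) (hσ : 1 < σ) (X X' : List ℕ)
    (hX : X.length ≤ m) (hX' : X'.length ≤ m)
    (hXd : ∀ c ∈ X, c < σ) (hX'd : ∀ c ∈ X', c < σ)
    (hlt : List.Lex (· < ·) X X') :
    IntEnc m σ X < IntEnc m σ X' :=
  intEnc_strictMono_general m σ hσ X X' hX hX' hXd hlt
end

section
/- Let τ ≥ 1 with 3τ - 1 ≤ n, and let S be a τ-synchronizing set of a text T of length n whose last character T[n] does not occur elsewhere in T. Then S is nonempty and max S ≥ n - 3τ + 2. -/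
namespace LZ

variable {α : Type*}

/-- `SubstrEq T i j ℓ`: the length-`ℓ` substrings of `T` (1-based positions)
starting at `i` and `j` are equal. -/
def SubstrEq (T : ℕ → α) (i j ℓ : ℕ) : Prop := ∀ t < ℓ, T (i + t) = T (j + t)

/-- `perP P ℓ`: the shortest period of the prefix `P[1..ℓ]` of the (1-based) pattern `P`. -/
noncomputable def perP (P : ℕ → α) (ℓ : ℕ) : ℕ :=
  sInf {p | 0 < p ∧ ∀ t, t + p < ℓ → P (1 + t) = P (1 + t + p)}

/-- A pattern `P` of length `m` is `τ`-periodic if `m ≥ 3τ - 1` and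
`per(P[1..3τ-1]) ≤ τ/3`. -/
noncomputable def IsPeriodicPat (τ : ℕ) (P : ℕ → α) (m : ℕ) : Prop :=
  3 * τ - 1 ≤ m ∧ 3 * perP P (3 * τ - 1) ≤ τ

/-- `runendP τ P m = 1 + p + lcp(P[1..m], P[1+p..m])` where `p = per(P[1..3τ-1])`. -/
noncomputable def runendP (τ : ℕ) (P : ℕ → α) (m : ℕ) : ℕ :=
  1 + perP P (3 * τ - 1) +
    sSup {ℓ | perP P (3 * τ - 1) + ℓ ≤ m ∧
      ∀ t < ℓ, P (1 + t) = P (1 + perP P (3 * τ - 1) + t)}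

/-- `rotP P p δ`: the length-`p` substring `P[1+δ..1+δ+p)` (a rotation of `P[1..p]`
when `P` has period `p`). -/
def rotP (P : ℕ → α) (p δ : ℕ) : List α := (List.range p).map fun t => P (1 + δ + t)

/-- The Lyndon root of a `τ`-periodic pattern `P`: the lexicographically smallest
rotation `P[1+δ..1+δ+p)`, `δ ∈ [0..p)`, where `p = per(P[1..3τ-1])`. -/
noncomputable def rootP [LinearOrder α] (τ : ℕ) (P : ℕ → α) : List α :=
  ((List.range (perP P (3 * τ - 1))).map (rotP P (perP P (3 * τ - 1)))).foldr min
    (rotP P (perP P (3 * τ - 1)) 0)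

/-- `headP τ P = |H'|` where `P[1..runend) = H' H^k H''` with `H = rootP τ P`:
the smallest offset `s` at which the Lyndon root occurs. -/
noncomputable def headP [LinearOrder α] (τ : ℕ) (P : ℕ → α) : ℕ :=
  sInf {s | rotP P (perP P (3 * τ - 1)) s = rootP τ P}

/-- `tailP τ P m = |H''|` in the factorization `P[1..runend) = H' H^k H''`. -/
noncomputable def tailP [LinearOrder α] (τ : ℕ) (P : ℕ → α) (m : ℕ) : ℕ :=
  (runendP τ P m - 1 - headP τ P) % perP P (3 * τ - 1)

/-- `runendfullP τ P m = runendP τ P m - tailP τ P m`. -/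
noncomputable def runendfullP [LinearOrder α] (τ : ℕ) (P : ℕ → α) (m : ℕ) : ℕ :=
  runendP τ P m - tailP τ P m

/-- `expP τ P m = k` in the factorization `P[1..runend) = H' H^k H''`. -/
noncomputable def expP [LinearOrder α] (τ : ℕ) (P : ℕ → α) (m : ℕ) : ℕ :=
  (runendP τ P m - 1 - headP τ P) / perP P (3 * τ - 1)

/-- `typePosP τ P m`: the type of `P` is `+1`, i.e. `runend(P) ≤ |P|` and
`P[runend(P)] ≻ P[runend(P) - p]`. The type is `-1` iff this fails. -/
noncomputable def typePosP [LinearOrder α] (τ : ℕ) (P : ℕ → α) (m : ℕ) : Prop :=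
  runendP τ P m ≤ m ∧ P (runendP τ P m - perP P (3 * τ - 1)) < P (runendP τ P m)

/-- Length of the longest common prefix of patterns `P[1..m₁]` and `Q[1..m₂]`. -/
noncomputable def lcpP (P Q : ℕ → α) (m₁ m₂ : ℕ) : ℕ :=
  sSup {ℓ | ℓ ≤ m₁ ∧ ℓ ≤ m₂ ∧ ∀ t < ℓ, P (1 + t) = Q (1 + t)}

/-- The pattern `P[1..m]` as a list. -/
def toListP (P : ℕ → α) (m : ℕ) : List α := (List.range m).map fun t => P (1 + t)

/-- The suffix `T[j..]` of the text, viewed as a 1-based pattern. -/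
def sufP (T : ℕ → α) (j : ℕ) : ℕ → α := fun k => T (j + k - 1)

/-- `Rset τ n T`: positions `i ∈ [1..n-3τ+2]` with `per(T[i..i+3τ-1)) ≤ τ/3`. -/
noncomputable def Rset (τ n : ℕ) (T : ℕ → α) : Set ℕ :=
  {i | 1 ≤ i ∧ i + 3 * τ ≤ n + 2 ∧ 3 * perP (sufP T i) (3 * τ - 1) ≤ τ}

/-- The end `e(j)` of the `τ`-run containing position `j ∈ Rset τ n T`:
`e(j) = j + p + lcp(T[j..n], T[j+p..n])`. -/
noncomputable def runEndT (τ n : ℕ) (T : ℕ → α) (j : ℕ) : ℕ :=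
  j + runendP τ (sufP T j) (n + 1 - j) - 1

/-- The Lyndon root of the `τ`-run at text position `j`. -/
noncomputable def rootT [LinearOrder α] (τ : ℕ) (T : ℕ → α) (j : ℕ) : List α :=
  rootP τ (sufP T j)

/-- `head` of the `τ`-run at text position `j`. -/
noncomputable def headT [LinearOrder α] (τ : ℕ) (T : ℕ → α) (j : ℕ) : ℕ :=
  headP τ (sufP T j)

/-- `tail` of the `τ`-run at text position `j`. -/
noncomputable def tailT [LinearOrder α] (τ n : ℕ) (T : ℕ → α) (j : ℕ) : ℕ :=
  tailP τ (sufP T j) (n + 1 - j)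

/-- The full run end `efull(j) = e(j) - tail(j)` of the `τ`-run at position `j`. -/
noncomputable def runEndFullT [LinearOrder α] (τ n : ℕ) (T : ℕ → α) (j : ℕ) : ℕ :=
  j + runendfullP τ (sufP T j) (n + 1 - j) - 1

/-- The exponent of the `τ`-run at text position `j`. -/
noncomputable def expT [LinearOrder α] (τ n : ℕ) (T : ℕ → α) (j : ℕ) : ℕ :=
  expP τ (sufP T j) (n + 1 - j)

/-- The type of text position `j` is `+1`. (Type is `-1` iff this fails.) -/
noncomputable def typePosT [LinearOrder α] (τ n : ℕ) (T : ℕ → α) (j : ℕ) : Prop :=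
  typePosP τ (sufP T j) (n + 1 - j)

/-- Starting positions of maximal blocks of `Rset`-positions (starts of maximal `τ`-runs). -/
noncomputable def Rprim (τ n : ℕ) (T : ℕ → α) : Set ℕ :=
  {j | j ∈ Rset τ n T ∧ j - 1 ∉ Rset τ n T}

/-- Positions of `Rset` of type `-1`. -/
noncomputable def RsetMinus [LinearOrder α] (τ n : ℕ) (T : ℕ → α) : Set ℕ :=
  {j | j ∈ Rset τ n T ∧ ¬ typePosT τ n T j}

/-- `OccSub T n i ℓ`: the set of starting positions of occurrences of the
substring `T[i..i+ℓ)` in the length-`n` text `T`. -/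
def OccSub (T : ℕ → α) (n i ℓ : ℕ) : Set ℕ :=
  {q | 1 ≤ q ∧ q + ℓ ≤ n + 1 ∧ SubstrEq T q i ℓ}

/-- `RMinMinus τ n T`: positions `j ∈ R⁻(τ,T)` with
`j = min (Occ(T[j..e(j)), T) ∩ R⁻(τ,T))`. -/
noncomputable def RMinMinus [LinearOrder α] (τ n : ℕ) (T : ℕ → α) : Set ℕ :=
  {j | j ∈ RsetMinus τ n T ∧
    j = sInf (OccSub T n j (runEndT τ n T j - j) ∩ RsetMinus τ n T)}

/-- `eminT τ n T j = max {j' ∈ [j..n] : [j..j') ⊆ RMinMinus τ n T}`. -/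
noncomputable def eminT [LinearOrder α] (τ n : ℕ) (T : ℕ → α) (j : ℕ) : ℕ :=
  sSup {j' | j ≤ j' ∧ j' ≤ n ∧ ∀ t, j ≤ t → t < j' → t ∈ RMinMinus τ n T}

/-- `S` is a `τ`-synchronizing set of the length-`n` text `T`:
`S ⊆ [1..n-2τ+1]`, consistency (equal length-`2τ` contexts give equal membership),
and density (`[i..i+τ) ∩ S ≠ ∅` iff `i ∉ Rset τ n T`, for `i ∈ [1..n-3τ+2]`). -/
noncomputable def SyncSet (τ n : ℕ) (T : ℕ → α) (S : Set ℕ) : Prop :=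
  (∀ s ∈ S, 1 ≤ s ∧ s + 2 * τ ≤ n + 1) ∧
  (∀ i j, 1 ≤ i → i + 2 * τ ≤ n + 1 → 1 ≤ j → j + 2 * τ ≤ n + 1 →
    SubstrEq T i j (2 * τ) → (i ∈ S ↔ j ∈ S)) ∧
  (∀ i, 1 ≤ i → i + 3 * τ ≤ n + 2 →
    ((Set.Ico i (i + τ) ∩ S).Nonempty ↔ i ∉ Rset τ n T))

/-- `succS S j = min {j' ∈ S : j' ≥ j}`. -/
noncomputable def succS (S : Set ℕ) (j : ℕ) : ℕ := sInf {j' | j' ∈ S ∧ j ≤ j'}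

end LZ

open LZ in
/-- Let `τ ≥ 1` with `3τ - 1 ≤ n`, and let `S` be a `τ`-synchronizing
set of a text `T` of length `n` whose last character `T[n]` does not occur elsewhere
in `T`. Then `S` is nonempty and `max S ≥ n - 3τ + 2`. -/
theorem sync_nonempty_max {α : Type*} (τ n : ℕ) (T : ℕ → α)
    (hτ : 1 ≤ τ) (hn : 3 * τ ≤ n + 1)
    (hlast : ∀ i, 1 ≤ i → i < n → T i ≠ T n)
    (S : Set ℕ) (hS : SyncSet τ n T S) :
    S.Nonempty ∧ ∃ s ∈ S, n + 2 ≤ s + 3 * τ := by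
  obtain ⟨h1, h2, hdens⟩ := hS
  set i := n + 2 - 3 * τ with hi
  have hi1 : 1 ≤ i := by omega
  have hi2 : i + 3 * τ ≤ n + 2 := by omega
  have hiR : i ∉ Rset τ n T := by
    rintro ⟨-, -, hper⟩
    set p := perP (sufP T i) (3 * τ - 1) with hpdef
    have hne : {q | 0 < q ∧ ∀ t, t + q < 3 * τ - 1 →
        sufP T i (1 + t) = sufP T i (1 + t + q)}.Nonempty :=
      ⟨3 * τ - 1, by omega, fun t ht => by omega⟩
    obtain ⟨hp0, hpprop⟩ : 0 < p ∧ ∀ t, t + p < 3 * τ - 1 →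
        sufP T i (1 + t) = sufP T i (1 + t + p) := Nat.sInf_mem hne
    have hple : p ≤ 3 * τ - 2 := by omega
    have := hpprop (3 * τ - 2 - p) (by omega)
    simp only [sufP] at this
    have he1 : i + (1 + (3 * τ - 2 - p)) - 1 = n - p := by omega
    have he2 : i + (1 + (3 * τ - 2 - p) + p) - 1 = n := by omega
    rw [he1, he2] at this
    exact hlast (n - p) (by omega) (by omega) this
  obtain ⟨s, hsI, hsS⟩ := ((hdens i hi1 hi2).2 hiR)
  exact ⟨⟨s, hsS⟩, s, hsS, by have := hsI.1; omega⟩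
end

section
/- Let τ ≥ 1 with 3τ - 1 ≤ n and let S be a τ-synchronizing set of T. The set D(τ,T,S) of all distinguishing prefixes {T[j .. succ_S(j) + 2τ) : j ∈ [1..n-3τ+2] \ R(τ,T)} is prefix-free: if D, D' ∈ D(τ,T,S) and D ≠ D', then D is not a prefix of D'. -/
open LZ in
/-- The set of distinguishing prefixes is prefix-free: if
`D_j = T[j..succ_S(j)+2τ)` is a prefix of `D_{j'} = T[j'..succ_S(j')+2τ)`
(for `j, j' ∈ [1..n-3τ+2] \ R(τ,T)`), then the two strings are equal,
i.e. they have the same length (equality of contents then follows from the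
prefix hypothesis). -/
theorem dist_prefixes_prefix_free {α : Type*} (τ n : ℕ) (T : ℕ → α)
    (hτ : 1 ≤ τ) (hn : 3 * τ ≤ n + 1)
    (S : Set ℕ) (hS : SyncSet τ n T S)
    (j j' : ℕ) (hj1 : 1 ≤ j) (hj2 : j + 3 * τ ≤ n + 2) (hjR : j ∉ Rset τ n T)
    (hj'1 : 1 ≤ j') (hj'2 : j' + 3 * τ ≤ n + 2) (hj'R : j' ∉ Rset τ n T)
    (hpref : succS S j + 2 * τ - j ≤ succS S j' + 2 * τ - j' ∧
      SubstrEq T j j' (succS S j + 2 * τ - j)) :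
    succS S j + 2 * τ - j = succS S j' + 2 * τ - j' := by
  obtain ⟨hSbound, hcons, hdens⟩ := hS
  set s := succS S j with hs
  set s' := succS S j' with hs'
  -- s ∈ S and j ≤ s < j + τ
  obtain ⟨w, hwI, hwS⟩ := (hdens j hj1 hj2).2 hjR
  have hwset : w ∈ {k | k ∈ S ∧ j ≤ k} := ⟨hwS, hwI.1⟩
  have hsmem : s ∈ {k | k ∈ S ∧ j ≤ k} := Nat.sInf_mem ⟨w, hwset⟩
  have hsw : s ≤ w := Nat.sInf_le hwset
  have hslt : s < j + τ := lt_of_le_of_lt hsw hwI.2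
  obtain ⟨hsS, hjs⟩ := hsmem
  -- s' ∈ S and j' ≤ s' < j' + τ
  obtain ⟨w', hwI', hwS'⟩ := (hdens j' hj'1 hj'2).2 hj'R
  have hwset' : w' ∈ {k | k ∈ S ∧ j' ≤ k} := ⟨hwS', hwI'.1⟩
  have hsmem' : s' ∈ {k | k ∈ S ∧ j' ≤ k} := Nat.sInf_mem ⟨w', hwset'⟩
  obtain ⟨hsS', hjs'⟩ := hsmem'
  -- the mirrored position
  set q := j' + (s - j) with hq
  have hq1 : 1 ≤ q := le_trans hj'1 (Nat.le_add_right _ _)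
  have hq2 : q + 2 * τ ≤ n + 1 := by omega
  have hs2 : s + 2 * τ ≤ n + 1 := by omega
  have hs1 : 1 ≤ s := le_trans hj1 hjs
  -- equal contexts
  have heq : SubstrEq T s q (2 * τ) := by
    intro t ht
    have h1 : (s - j) + t < s + 2 * τ - j := by omega
    have h2 := hpref.2 _ h1
    have e1 : j + (s - j + t) = s + t := by omega
    have e2 : j' + (s - j + t) = q + t := by omega
    rwa [e1, e2] at h2
  have hqS : q ∈ S := (hcons s q hs1 hs2 hq1 hq2 heq).1 hsS
  have hle : s' ≤ q := Nat.sInf_le ⟨hqS, Nat.le_add_right _ _⟩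
  omega
end

section
/- Let τ ≥ 1 with 3τ - 1 ≤ n and let S be a τ-synchronizing set of T. Let P be a τ-nonperiodic pattern of length m ≥ 3τ - 1 that occurs in T. Then there exists a unique D ∈ D(τ,T,S) (the set of distinguishing prefixes) that is a prefix of P. -/
open LZ

private lemma succS_spec {S : Set ℕ} {j s : ℕ} (hs : s ∈ S) (hjs : j ≤ s) :
    succS S j ∈ S ∧ j ≤ succS S j ∧ succS S j ≤ s := by
  have hne : {j' | j' ∈ S ∧ j ≤ j'}.Nonempty := ⟨s, hs, hjs⟩
  have hmem := Nat.sInf_mem hne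
  exact ⟨hmem.1, hmem.2, Nat.sInf_le ⟨hs, hjs⟩⟩

private lemma key_lemma {α : Type*} (τ n : ℕ) (T : ℕ → α)
    (S : Set ℕ) (hS : SyncSet τ n T S) (P : ℕ → α)
    (j₀ j₁ : ℕ)
    (h₀ : 1 ≤ j₀ ∧ j₀ + 3 * τ ≤ n + 2 ∧ j₀ ∉ Rset τ n T)
    (h₁ : 1 ≤ j₁ ∧ j₁ + 3 * τ ≤ n + 2 ∧ j₁ ∉ Rset τ n T)
    (hp₀ : ∀ t < succS S j₀ + 2 * τ - j₀, T (j₀ + t) = P (1 + t))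
    (hp₁ : ∀ t < succS S j₁ + 2 * τ - j₁, T (j₁ + t) = P (1 + t))
    (hle : succS S j₁ + 2 * τ - j₁ ≤ succS S j₀ + 2 * τ - j₀) :
    succS S j₀ + 2 * τ - j₀ ≤ succS S j₁ + 2 * τ - j₁ := by
  obtain ⟨hb, hcons, hdens⟩ := hS
  -- get synchronizing positions near j₀ and j₁
  obtain ⟨s₀', hs₀'⟩ := (hdens j₀ h₀.1 h₀.2.1).2 h₀.2.2
  obtain ⟨s₁', hs₁'⟩ := (hdens j₁ h₁.1 h₁.2.1).2 h₁.2.2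
  obtain ⟨hS₀, hj₀le, _⟩ := succS_spec hs₀'.2 hs₀'.1.1
  obtain ⟨hS₁, hj₁le, _⟩ := succS_spec hs₁'.2 hs₁'.1.1
  set s₀ := succS S j₀ with hs₀def
  set s₁ := succS S j₁ with hs₁def
  set d := s₁ - j₁ with hddef
  have hd : s₁ = j₁ + d := by omega
  have hℓ₁ : s₁ + 2 * τ - j₁ = d + 2 * τ := by omega
  have hb₀ := hb s₀ hS₀
  have hb₁ := hb s₁ hS₁
  -- show j₀ + d ∈ S by consistency
  have hsub : SubstrEq T (j₀ + d) s₁ (2 * τ) := by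
    intro t ht
    have h1 : d + t < s₀ + 2 * τ - j₀ := by omega
    have h2 : d + t < s₁ + 2 * τ - j₁ := by omega
    have e0 : T (j₀ + d + t) = P (1 + (d + t)) := by
      rw [add_assoc]; exact hp₀ (d + t) h1
    have e1 : T (s₁ + t) = P (1 + (d + t)) := by
      rw [hd, add_assoc]; exact hp₁ (d + t) h2
    rw [e0, e1]
  have hmem : j₀ + d ∈ S := by
    have := hcons (j₀ + d) s₁ (by omega) (by omega) (by omega) hb₁.2 hsub
    exact this.mpr hS₁
  have : s₀ ≤ j₀ + d := Nat.sInf_le ⟨hmem, by omega⟩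
  omega

open LZ in
/-- Let `τ ≥ 1` with `3τ - 1 ≤ n`, `S` a `τ`-synchronizing set of
`T`, and `P` a `τ`-nonperiodic pattern of length `m ≥ 3τ - 1` occurring in `T`.
Then there is a distinguishing prefix `D_{j₀} = T[j₀..succ_S(j₀)+2τ)`
(`j₀ ∈ [1..n-3τ+2] \ R(τ,T)`) that is a prefix of `P`, and it is unique as a
string: any other distinguishing prefix of `P` has the same length (hence, being
prefixes of `P`, the strings coincide). -/
theorem dist_prefix_exists_unique {α : Type*} (τ n : ℕ) (T : ℕ → α)
    (hτ : 1 ≤ τ) (hn : 3 * τ ≤ n + 1)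
    (S : Set ℕ) (hS : SyncSet τ n T S)
    (P : ℕ → α) (m : ℕ) (hm : 3 * τ - 1 ≤ m)
    (hnp : ¬ IsPeriodicPat τ P m)
    (hocc : ∃ q, 1 ≤ q ∧ q + m ≤ n + 1 ∧ ∀ t < m, T (q + t) = P (1 + t)) :
    ∃ j₀, (1 ≤ j₀ ∧ j₀ + 3 * τ ≤ n + 2 ∧ j₀ ∉ Rset τ n T) ∧
      (succS S j₀ + 2 * τ - j₀ ≤ m ∧
        ∀ t < succS S j₀ + 2 * τ - j₀, T (j₀ + t) = P (1 + t)) ∧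
      ∀ j₁, (1 ≤ j₁ ∧ j₁ + 3 * τ ≤ n + 2 ∧ j₁ ∉ Rset τ n T) →
        (succS S j₁ + 2 * τ - j₁ ≤ m ∧
          ∀ t < succS S j₁ + 2 * τ - j₁, T (j₁ + t) = P (1 + t)) →
        succS S j₁ + 2 * τ - j₁ = succS S j₀ + 2 * τ - j₀ := by
  obtain ⟨q, hq1, hqm, hqT⟩ := hocc
  have h3τ : 1 ≤ 3 * τ := by omega
  -- period sets of sufP T q and P over length 3τ-1 coincide
  have hperset : {p | 0 < p ∧ ∀ t, t + p < 3 * τ - 1 → sufP T q (1 + t) = sufP T q (1 + t + p)}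
      = {p | 0 < p ∧ ∀ t, t + p < 3 * τ - 1 → P (1 + t) = P (1 + t + p)} := by
    have hsuf : ∀ t < m, sufP T q (1 + t) = P (1 + t) := by
      intro t ht
      have : q + (1 + t) - 1 = q + t := by omega
      simp only [sufP, this]; exact hqT t ht
    ext p
    constructor
    all_goals
      rintro ⟨hp, h⟩
      refine ⟨hp, fun t htp => ?_⟩
      have ht : t < m := by omega
      have htp' : t + p < m := by omega
      have e1 := hsuf t ht
      have e2 := hsuf (t + p) htp'
      rw [← add_assoc] at e2
      have := h t htp
      first
      | (rw [e1, e2] at this; exact this)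
      | (rw [← e1, ← e2] at this; exact this)
  have hper : perP (sufP T q) (3 * τ - 1) = perP P (3 * τ - 1) := by
    unfold perP; rw [hperset]
  have hqR : q ∉ Rset τ n T := by
    intro hmem
    exact hnp ⟨hm, by have := hmem.2.2; rw [hper] at this; exact this⟩
  have hqbound : q + 3 * τ ≤ n + 2 := by omega
  have h₀ : 1 ≤ q ∧ q + 3 * τ ≤ n + 2 ∧ q ∉ Rset τ n T := ⟨hq1, hqbound, hqR⟩
  obtain ⟨hb, hcons, hdens⟩ := hS
  obtain ⟨s', hs'⟩ := (hdens q hq1 hqbound).2 hqR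
  obtain ⟨hSq, hqle, hsle⟩ := succS_spec hs'.2 hs'.1.1
  have hs'lt : s' < q + τ := hs'.1.2
  have hlen : succS S q + 2 * τ - q ≤ m := by omega
  have hpre : ∀ t < succS S q + 2 * τ - q, T (q + t) = P (1 + t) := by
    intro t ht; exact hqT t (by omega)
  refine ⟨q, h₀, ⟨hlen, hpre⟩, ?_⟩
  intro j₁ h₁ hp₁
  rcases le_total (succS S j₁ + 2 * τ - j₁) (succS S q + 2 * τ - q) with h | h
  · exact le_antisymm h (key_lemma τ n T S ⟨hb, hcons, hdens⟩ P q j₁ h₀ h₁ hpre hp₁.2 h)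
  · exact le_antisymm (key_lemma τ n T S ⟨hb, hcons, hdens⟩ P j₁ q h₁ h₀ hp₁.2 hpre h) h
end

section
/- Let T be a string of length n and let τ ∈ [1..⌊n/2⌋]. Then the number of maximal runs |R'(τ,T)| ≤ 2n/τ, and the sum over all j ∈ R'(τ,T) of (e(j) - j) is at most 2n, where e(j) denotes the end of the τ-run starting at j. -/
namespace RunsAux

variable {α : Type*}

/-- `T` has period `p` on the interval `[a, b)`. -/
def PerOn (T : ℕ → α) (a b p : ℕ) : Prop := ∀ i, a ≤ i → i + p < b → T i = T (i + p)

lemma perOn_mono (T : ℕ → α) {a b a' b' p : ℕ} (ha : a ≤ a') (hb : b' ≤ b)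
    (h : PerOn T a b p) : PerOn T a' b' p :=
  fun i hi hip => h i (le_trans ha hi) (lt_of_lt_of_le hip hb)

lemma perOn_iterate (T : ℕ → α) {a b g : ℕ} (h : PerOn T a b g) :
    ∀ m x, a ≤ x → x + g * m < b → T x = T (x + g * m) := by
  intro m
  induction m with
  | zero => intro x _ _; simp
  | succ m ih =>
    intro x hax hxb
    have h1 : T x = T (x + g * m) := ih x hax (by nlinarith [Nat.le_refl g])
    have h2 : T (x + g * m) = T (x + g * m + g) :=
      h (x + g * m) (by omega) (by rw [show x + g * m + g = x + g * (m+1) by ring]; exact hxb)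
    rw [h1, h2]; congr 1; ring

lemma perOn_trans_dvd (T : ℕ → α) {a b g : ℕ} (h : PerOn T a b g)
    {x y : ℕ} (hax : a ≤ x) (hxy : x ≤ y) (hyb : y < b) (hdvd : g ∣ y - x) :
    T x = T y := by
  obtain ⟨m, hm⟩ := hdvd
  have hy : y = x + g * m := by omega
  rw [hy]
  exact perOn_iterate T h m x hax (by omega)

lemma fine_wilf_aux (T : ℕ → α) :
    ∀ N p q a b, p + q ≤ N → 0 < p → p ≤ q → PerOn T a b p → PerOn T a b q →
      a + p + q ≤ b → PerOn T a b (Nat.gcd p q) := by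
  intro N
  induction N with
  | zero => intro p q a b h hp hq _ _ _; omega
  | succ N ih =>
    intro p q a b hN hp hpq hP hQ hb
    rcases eq_or_lt_of_le hpq with rfl | hlt
    · simpa [Nat.gcd_self] using hP
    · -- p < q
      set r := q - p with hr
      have hr0 : 0 < r := by omega
      have hQ' : PerOn T a (b - p) r := by
        intro i hai hib
        have h1 : T i = T (i + q) := hQ i hai (by omega)
        have h2 : T (i + r) = T (i + r + p) := hP (i + r) (by omega) (by omega)
        have h3 : i + r + p = i + q := by omega
        rw [h1, h2, h3]
      have hP' : PerOn T a (b - p) p := fun i hai hib => hP i hai (by omega)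
      have hg : PerOn T a (b - p) (Nat.gcd p r) := by
        rcases le_total p r with hle | hle
        · exact ih p r a (b - p) (by omega) hp hle hP' hQ' (by omega)
        · have := ih r p a (b - p) (by omega) hr0 hle hQ' hP' (by omega)
          rwa [Nat.gcd_comm] at this
      have hgcd : Nat.gcd p r = Nat.gcd p q := by
        apply Nat.dvd_antisymm
        · exact Nat.dvd_gcd (Nat.gcd_dvd_left _ _)
            (by have h1 := Nat.gcd_dvd_left p r; have h2 := Nat.gcd_dvd_right p r
                have : q = r + p := by omega
                rw [this]; exact Nat.dvd_add h2 h1)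
        · exact Nat.dvd_gcd (Nat.gcd_dvd_left _ _)
            (by have h1 := Nat.gcd_dvd_left p q; have h2 := Nat.gcd_dvd_right p q
                exact Nat.dvd_sub h2 h1)
      rw [hgcd] at hg
      -- extend from [a, b-p) to [a, b)
      set g := Nat.gcd p q with hgdef
      have hgr : g ≤ r := by
        rw [← hgcd]; exact Nat.le_of_dvd hr0 (Nat.gcd_dvd_right p r)
      intro i
      induction i using Nat.strong_induction_on with
      | _ i ihi =>
        intro hai hib
        rcases lt_or_ge (i + g) (b - p) with hcase | hcase
        · exact hg i hai (by omega)
        · -- i ≥ a + p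
          have hip : a + p ≤ i := by omega
          have h1 : T (i - p) = T i := by
            have := hP (i - p) (by omega) (by omega)
            rwa [show i - p + p = i by omega] at this
          have h2 : T (i - p + g) = T (i + g) := by
            have := hP (i - p + g) (by omega) (by omega)
            rwa [show i - p + g + p = i + g by omega] at this
          have c1 : i - p < i := by omega
          have c2 : a ≤ i - p := by omega
          have c3 : i - p + g < b := by omega
          have h3 : T (i - p) = T (i - p + g) := ihi (i - p) c1 c2 c3
          rw [← h1, h3, h2]

lemma fine_wilf (T : ℕ → α) {p q a b : ℕ} (hp : 0 < p) (hq : 0 < q)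
    (hP : PerOn T a b p) (hQ : PerOn T a b q) (hb : a + p + q ≤ b) :
    PerOn T a b (Nat.gcd p q) := by
  rcases le_total p q with h | h
  · exact fine_wilf_aux T (p + q) p q a b le_rfl hp h hP hQ hb
  · rw [Nat.gcd_comm]
    exact fine_wilf_aux T (p + q) q p a b (by omega) hq h hQ hP (by omega)

open LZ



noncomputable def pp (τ : ℕ) (T : ℕ → α) (j : ℕ) : ℕ := perP (sufP T j) (3*τ-1)

lemma sufP_eq (T : ℕ → α) (j k : ℕ) : sufP T j k = T (j + k - 1) := rfl

lemma pp_props (τ : ℕ) (T : ℕ → α) (j : ℕ) :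
    0 < pp τ T j ∧ ∀ t, t + pp τ T j < 3*τ-1 → T (j + t) = T (j + t + pp τ T j) := by
  have hne : {p | 0 < p ∧ ∀ t, t + p < 3*τ-1 →
      sufP T j (1+t) = sufP T j (1+t+p)}.Nonempty := by
    refine ⟨3*τ+1, ?_, ?_⟩
    · omega
    · intro t ht; omega
  have hmem := Nat.sInf_mem hne
  obtain ⟨h1, h2⟩ := hmem
  refine ⟨h1, ?_⟩
  intro t ht
  have h3 := h2 t ht
  have h4 : T (j + (1+t) - 1) = T (j + (1+t+ pp τ T j) - 1) := h3
  rwa [show j + (1+t) - 1 = j + t by omega,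
      show j + (1+t+ pp τ T j) - 1 = j + t + pp τ T j by omega] at h4

lemma pp_le (τ : ℕ) (T : ℕ → α) (j p' : ℕ) (hp' : 0 < p')
    (hper : ∀ t, t + p' < 3*τ-1 → T (j + t) = T (j + t + p')) :
    pp τ T j ≤ p' := by
  apply Nat.sInf_le
  refine ⟨hp', ?_⟩
  intro t ht
  have := hper t ht
  simp only [sufP_eq]
  rw [show j + (1+t) - 1 = j + t by omega, show j + (1+t+p') - 1 = j + t + p' by omega]
  exact this

lemma runEnd_props {τ n : ℕ} {T : ℕ → α} {j : ℕ} (hj : j ∈ Rset τ n T) :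
    j + 3*τ - 1 ≤ runEndT τ n T j ∧
    runEndT τ n T j ≤ n + 1 ∧
    PerOn T j (runEndT τ n T j) (pp τ T j) ∧
    (runEndT τ n T j ≤ n → T (runEndT τ n T j - pp τ T j) ≠ T (runEndT τ n T j)) := by
  obtain ⟨hj1, hj2, hj3⟩ := hj
  have hp3 : 3 * pp τ T j ≤ τ := hj3
  obtain ⟨hp0, hper⟩ := pp_props τ T j
  have hτ3 : 3 ≤ τ := by omega
  have hp_lt : pp τ T j ≤ 3*τ-1 := by omega
  set p := pp τ T j with hp_def
  set LS : Set ℕ := {ℓ | perP (sufP T j) (3*τ-1) + ℓ ≤ n + 1 - j ∧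
      ∀ t < ℓ, sufP T j (1+t) = sufP T j (1 + perP (sufP T j) (3*τ-1) + t)} with hLS
  have hpp_eq : perP (sufP T j) (3*τ-1) = p := rfl
  have hmemLS : ∀ ℓ, ℓ ∈ LS ↔ (p + ℓ ≤ n + 1 - j ∧ ∀ t < ℓ, T (j + t) = T (j + p + t)) := by
    intro ℓ
    rw [hLS]
    simp only [Set.mem_setOf_eq, sufP_eq, hpp_eq]
    constructor
    · rintro ⟨ha, hb⟩
      refine ⟨ha, fun t ht => ?_⟩
      have := hb t ht
      rwa [show j + (1+t) - 1 = j + t by omega,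
           show j + (1 + p + t) - 1 = j + p + t by omega] at this
    · rintro ⟨ha, hb⟩
      refine ⟨ha, fun t ht => ?_⟩
      have := hb t ht
      rwa [show j + (1+t) - 1 = j + t by omega,
           show j + (1 + p + t) - 1 = j + p + t by omega]
  have hre : runEndT τ n T j = j + p + sSup LS := by
    show j + runendP τ (sufP T j) (n + 1 - j) - 1 = j + p + sSup LS
    rw [runendP, ← hLS, hpp_eq]
    omega
  have hbdd : BddAbove LS := by
    refine ⟨n + 1 - j, fun ℓ hℓ => ?_⟩
    rw [hmemLS] at hℓ
    omega
  have hne : LS.Nonempty := by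
    refine ⟨0, ?_⟩
    rw [hmemLS]
    exact ⟨by omega, fun t ht => absurd ht (by omega)⟩
  set L := sSup LS with hL_def
  have hLmem : L ∈ LS := Nat.sSup_mem hne hbdd
  rw [hmemLS] at hLmem
  have hge : 3*τ-1-p ∈ LS := by
    rw [hmemLS]
    refine ⟨by omega, fun t ht => ?_⟩
    have := hper t (by omega)
    rw [this]
    congr 1
    omega
  have hLge : 3*τ-1-p ≤ L := le_csSup hbdd hge
  refine ⟨by omega, by omega, ?_, ?_⟩
  · intro i hii hib
    have ht := hLmem.2 (i - j) (by omega)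
    rw [show j + (i - j) = i by omega] at ht
    rw [ht]
    congr 1
    omega
  · intro hen hcontra
    have hnot : L + 1 ∉ LS := fun hmem => by
      have := le_csSup hbdd hmem
      omega
    rw [hmemLS] at hnot
    push_neg at hnot
    obtain ⟨t, ht, hneq⟩ := hnot (by omega)
    rcases lt_or_ge t L with htL | htL
    · exact hneq (hLmem.2 t htL)
    · have htL' : t = L := by omega
      apply hneq
      rw [htL', show j + L = runEndT τ n T j - p by omega,
          show j + p + L = runEndT τ n T j by omega]
      exact hcontra

/-- Fill lemma: every position inside a run (with full window) is in `Rset`. -/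
lemma fill {τ n : ℕ} {T : ℕ → α} {j i : ℕ} (hj : j ∈ Rset τ n T)
    (hji : j ≤ i) (hie : i + 3*τ - 1 ≤ runEndT τ n T j) : i ∈ Rset τ n T := by
  obtain ⟨hge, hle, hper, _⟩ := runEnd_props hj
  obtain ⟨hj1, hj2, hj3⟩ := hj
  have hp3 : 3 * pp τ T j ≤ τ := hj3
  have hp0 : 0 < pp τ T j := (pp_props τ T j).1
  have hτ3 : 3 ≤ τ := by omega
  refine ⟨by omega, by omega, ?_⟩
  have hle' : pp τ T i ≤ pp τ T j := by
    apply pp_le τ T i (pp τ T j) hp0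
    intro t ht
    exact hper (i + t) (by omega) (by omega)
  show 3 * pp τ T i ≤ τ
  omega

/-- Pair lemma: distinct run starts are far apart and overlap little. -/
lemma pair {τ n : ℕ} {T : ℕ → α} {j j' : ℕ} (hj : j ∈ Rprim τ n T)
    (hj' : j' ∈ Rprim τ n T) (hlt : j < j') :
    j + 2*τ ≤ j' ∧ runEndT τ n T j ≤ j' + τ := by
  obtain ⟨hjR, _⟩ := hj
  obtain ⟨hj'R, hj'pred⟩ := hj'
  obtain ⟨hge, hle, hper, hmax⟩ := runEnd_props hjR
  obtain ⟨hge', hle', hper', _⟩ := runEnd_props hj'R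
  have hp0 : 0 < pp τ T j := (pp_props τ T j).1
  have hp0' : 0 < pp τ T j' := (pp_props τ T j').1
  have hp3 : 3 * pp τ T j ≤ τ := hjR.2.2
  have hp3' : 3 * pp τ T j' ≤ τ := hj'R.2.2
  have hτ3 : 3 ≤ τ := by omega
  set p := pp τ T j
  set p' := pp τ T j'
  set e := runEndT τ n T j with he_def
  -- j' - 1 is not in Rset, so e < (j'-1) + 3τ - 1
  have hgap : e ≤ j' + 3*τ - 3 := by
    by_contra hcon
    exact hj'pred (fill hjR (by omega) (by omega))
  have hen : e ≤ n := by
    have := hj'R.2.1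
    omega
  -- overlap bound: e < j' + p + p'
  have hov : e < j' + p + p' := by
    by_contra hcon
    push_neg at hcon
    -- periods p and p' on [j', e)
    have hP1 : PerOn T j' e p := perOn_mono T (by omega) le_rfl hper
    have hP2 : PerOn T j' e p' := perOn_mono T le_rfl (by omega) hper'
    have hg := fine_wilf T hp0 hp0' hP1 hP2 (by omega)
    set g := Nat.gcd p p' with hg_def
    have hgp : g ∣ p := Nat.gcd_dvd_left _ _
    have hgp' : g ∣ p' := Nat.gcd_dvd_right _ _
    apply hmax hen
    have h1 : T (e - p') = T e := by
      have := hper' (e - p') (by omega) (by omega)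
      rwa [show e - p' + p' = e by omega] at this
    have h2 : T (e - p) = T (e - p') := by
      rcases le_total p p' with hc | hc
      · exact (perOn_trans_dvd T hg (x := e - p') (y := e - p) (by omega) (by omega)
          (by omega) (by rw [show e - p - (e - p') = p' - p by omega];
                         exact Nat.dvd_sub hgp' hgp)).symm
      · exact perOn_trans_dvd T hg (x := e - p) (y := e - p') (by omega) (by omega)
          (by omega) (by rw [show e - p' - (e - p) = p - p' by omega];
                         exact Nat.dvd_sub hgp hgp')
    rw [h2, h1]
  constructor
  · omega
  · omega

end RunsAux

open RunsAux in
open LZ in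
/-- For `τ ∈ [1..⌊n/2⌋]`, the number of maximal `τ`-runs satisfies
`|R'(τ,T)| ≤ 2n/τ` (stated multiplicatively as `τ · |R'(τ,T)| ≤ 2n`), and the sum
over all run starts `j ∈ R'(τ,T)` of the run lengths `e(j) - j` is at most `2n`. -/
theorem runs_count_and_length_bound {α : Type*} [LinearOrder α] (τ n : ℕ) (T : ℕ → α)
    (hτ : 1 ≤ τ) (hn : 2 * τ ≤ n) :
    τ * (Rprim τ n T).ncard ≤ 2 * n ∧
      (∑ᶠ j ∈ Rprim τ n T, (runEndT τ n T j - j)) ≤ 2 * n := by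
    classical
  have hsub : Rprim τ n T ⊆ Set.Icc 1 n := by
    intro j hj
    obtain ⟨⟨h1, h2, _⟩, _⟩ := hj
    exact ⟨h1, by omega⟩
  have hfin : (Rprim τ n T).Finite := (Set.finite_Icc 1 n).subset hsub
  set F := hfin.toFinset with hF
  have hFmem : ∀ j, j ∈ F ↔ j ∈ Rprim τ n T := fun j => hfin.mem_toFinset
  have hpair : ∀ {a b : ℕ}, a ∈ F → b ∈ F → a < b →
      a + 2*τ ≤ b ∧ runEndT τ n T a ≤ b + τ := by
    intro a b ha hb hab
    exact pair ((hFmem a).1 ha) ((hFmem b).1 hb) hab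
  constructor
  · -- count bound
    have hncard : (Rprim τ n T).ncard = F.card := Set.ncard_eq_toFinset_card _ hfin
    rw [hncard]
    have hcard : F.card ≤ (Finset.range (n / (2*τ) + 1)).card := by
      have : ∀ j ∈ F, j / (2*τ) ∈ Finset.range (n / (2*τ) + 1) := by
        intro j hj
        have hjn : j ≤ n := (hsub ((hFmem j).1 hj)).2
        simp only [Finset.mem_range, Nat.lt_succ_iff]
        exact Nat.div_le_div_right hjn
      apply Finset.card_le_card_of_injOn (fun j => j / (2*τ)) this
      intro a ha b hb hab
      simp only at hab
      by_contra hne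
      have key : ∀ {x y : ℕ}, x ∈ F → y ∈ F → x < y → x / (2*τ) ≠ y / (2*τ) := by
        intro x y hx hy hxy
        have h2τ : x + 2*τ ≤ y := (hpair hx hy hxy).1
        have hle : (x + 2*τ) / (2*τ) ≤ y / (2*τ) := Nat.div_le_div_right h2τ
        rw [Nat.add_div_right x (by omega)] at hle
        omega
      rcases lt_or_gt_of_ne hne with h | h
      · exact key ha hb h hab
      · exact key hb ha h hab.symm
    have h1 : 2 * (τ * (n / (2*τ))) ≤ n := by
      calc 2 * (τ * (n / (2*τ))) = n / (2*τ) * (2*τ) := by ring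
        _ ≤ n := Nat.div_mul_le_self n (2*τ)
    rw [Finset.card_range] at hcard
    have h2 : τ * F.card ≤ τ * (n / (2*τ) + 1) := Nat.mul_le_mul_left τ hcard
    have h3 : τ * (n / (2*τ) + 1) = τ * (n / (2*τ)) + τ := by ring
    omega
  · -- length bound
    have hsum : (∑ᶠ j ∈ Rprim τ n T, (runEndT τ n T j - j))
        = ∑ j ∈ F, (runEndT τ n T j - j) := finsum_mem_eq_finite_toFinset_sum _ hfin
    rw [hsum]
    have hstep1 : ∀ j ∈ F, runEndT τ n T j - j
        = ((Finset.Icc 1 n).filter (fun i => j ≤ i ∧ i < runEndT τ n T j)).card := by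
      intro j hj
      have hjR : j ∈ Rset τ n T := ((hFmem j).1 hj).1
      obtain ⟨_, hle, _, _⟩ := runEnd_props hjR
      have hj1 : 1 ≤ j := hjR.1
      have : (Finset.Icc 1 n).filter (fun i => j ≤ i ∧ i < runEndT τ n T j)
          = Finset.Ico j (runEndT τ n T j) := by
        ext i
        simp only [Finset.mem_filter, Finset.mem_Icc, Finset.mem_Ico]
        omega
      rw [this, Nat.card_Ico]
    calc ∑ j ∈ F, (runEndT τ n T j - j)
        = ∑ j ∈ F, ((Finset.Icc 1 n).filter
            (fun i => j ≤ i ∧ i < runEndT τ n T j)).card := Finset.sum_congr rfl hstep1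
      _ = ∑ j ∈ F, ∑ i ∈ Finset.Icc 1 n,
            (if j ≤ i ∧ i < runEndT τ n T j then 1 else 0) := by
          refine Finset.sum_congr rfl fun j _ => ?_
          rw [Finset.card_filter]
      _ = ∑ i ∈ Finset.Icc 1 n, ∑ j ∈ F,
            (if j ≤ i ∧ i < runEndT τ n T j then 1 else 0) := Finset.sum_comm
      _ ≤ ∑ i ∈ Finset.Icc 1 n, 2 := by
          refine Finset.sum_le_sum fun i _ => ?_
          rw [← Finset.card_filter]
          by_contra hcon
          push_neg at hcon
          obtain ⟨a, ha, b, hb, c, hc, hab, hac, hbc⟩ := Finset.two_lt_card.1 hcon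
          have hmem : ∀ {x : ℕ}, x ∈ (F.filter fun j => j ≤ i ∧ i < runEndT τ n T j) →
              x ∈ F ∧ x ≤ i ∧ i < runEndT τ n T x := by
            intro x hx
            simpa using Finset.mem_filter.1 hx
          have htri : ∀ {u v w : ℕ},
              u ∈ F ∧ u ≤ i ∧ i < runEndT τ n T u →
              v ∈ F ∧ v ≤ i ∧ i < runEndT τ n T v →
              w ∈ F ∧ w ≤ i ∧ i < runEndT τ n T w →
              u < v → v < w → False := by
            intro u v w hu hv hw huv hvw
            have h1 : runEndT τ n T u ≤ v + τ := (hpair hu.1 hv.1 huv).2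
            have h2 : v + 2*τ ≤ w := (hpair hv.1 hw.1 hvw).1
            have h3 : i < runEndT τ n T u := hu.2.2
            have h4 : w ≤ i := hw.2.1
            omega
          have ha' := hmem ha
          have hb' := hmem hb
          have hc' := hmem hc
          rcases lt_trichotomy a b with h1 | h1 | h1
          · rcases lt_trichotomy b c with h2 | h2 | h2
            · exact htri ha' hb' hc' h1 h2
            · exact hbc h2
            · rcases lt_trichotomy a c with h3 | h3 | h3
              · exact htri ha' hc' hb' h3 h2
              · exact hac h3
              · exact htri hc' ha' hb' h3 h1
          · exact hab h1
          · rcases lt_trichotomy a c with h3 | h3 | h3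
            · exact htri hb' ha' hc' h1 h3
            · exact hac h3
            · rcases lt_trichotomy b c with h2 | h2 | h2
              · exact htri hb' hc' ha' h2 h3
              · exact hbc h2
              · exact htri hc' hb' ha' h2 h1
      _ ≤ 2 * n := by
          rw [Finset.sum_const, Nat.card_Icc, smul_eq_mul]
          omega
end

section
/- Let τ ∈ [1..⌊n/2⌋]. For every position j such that both j and j-1 belong to R(τ,T), the τ-runs at j-1 and j agree: they have the same Lyndon root, the same run end, the same tail, the same full run end, and the same type. -/
/-!
The windows of length `ℓ = 3τ - 1` at `j - 1` and `j` overlap in `ℓ - 1` positions, which carry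
both minimal periods `p` and `q`. As `p + q < ℓ`, Fine–Wilf puts the period `gcd p q` on the
overlap; it extends to both windows, so minimality forces `p = q`. The length-`p` rotations at `j`
are those at `j - 1` shifted cyclically by one, so the Lyndon roots agree, and as the rotations of
a primitive word are pairwise distinct, the offset of the root moves by one modulo `p`. The
lcp-extension at `j - 1` is one longer than at `j`, so both runs end at the same text position;
tail, full end and type depend only on that end and on the root offset modulo `p`.
-/

theorem List.foldr_min_mem_cons {β : Type*} [LinearOrder β] (l : List β) (b : β) :
    l.foldr min b ∈ b :: l := by
  induction l with
  | nil => simp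
  | cons a l ih =>
    rcases min_choice a (l.foldr min b) with h | h <;> simp only [List.foldr_cons, h]
    · simp
    · exact List.mem_cons.2 ((List.mem_cons.1 ih).imp_right (List.mem_cons_of_mem a))

theorem Nat.sSup_eq_sSup_add_one {S S' : Set ℕ} (h : ∀ k, k + 1 ∈ S ↔ k ∈ S')
    (hne : S'.Nonempty) (hbdd : BddAbove S') : sSup S = sSup S' + 1 := by
  obtain ⟨b, hb⟩ := hbdd
  have hmem : sSup S' + 1 ∈ S := (h _).2 (Nat.sSup_mem hne ⟨b, hb⟩)
  refine le_antisymm (csSup_le ⟨_, hmem⟩ fun x hx => ?_) (le_csSup ⟨b + 1, fun x hx => ?_⟩ hmem)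
  · rcases x with _ | k
    · omega
    · exact Nat.succ_le_succ (le_csSup ⟨b, hb⟩ ((h k).1 hx))
  · rcases x with _ | k
    · omega
    · exact Nat.succ_le_succ (hb ((h k).1 hx))

namespace LZ

variable {α : Type*} {P Q : ℕ → α} {τ m ℓ p d δ : ℕ}

section Periods

@[simp]
theorem length_toListP : (toListP P ℓ).length = ℓ := by
  simp [toListP]

theorem getElem?_toListP {t : ℕ} (ht : t < ℓ) : (toListP P ℓ)[t]? = some (P (1 + t)) := by
  simp [toListP, ht]

theorem hasPeriod_toListP_iff :
    (toListP P ℓ).HasPeriod p ↔ ∀ t, t + p < ℓ → P (1 + t) = P (1 + t + p) := by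
  simp only [List.hasPeriod_iff_getElem?, toListP, List.length_map, List.length_range]
  refine forall_congr' fun t => ⟨fun h ht => ?_, fun h ht => ?_⟩
  · simpa [ht, show t < ℓ by omega, add_assoc] using h (by omega)
  · simpa [show t + p < ℓ by omega, show t < ℓ by omega, add_assoc] using h (by omega)

theorem _root_.List.HasPeriod.toListP_apply_eq (h : (toListP P ℓ).HasPeriod p) {a b : ℕ}
    (ha : a < ℓ) (hb : b < ℓ) (hab : a ≡ b [MOD p]) : P (1 + a) = P (1 + b) := by
  have := (h.getElem?_mod p a _ (by simpa using ha)).symm.trans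
    (hab ▸ h.getElem?_mod p b _ (by simpa using hb))
  simpa [getElem?_toListP ha, getElem?_toListP hb] using this

theorem perP_pos_and_hasPeriod (P : ℕ → α) (ℓ : ℕ) :
    0 < perP P ℓ ∧ (toListP P ℓ).HasPeriod (perP P ℓ) := by
  have hne : {p | 0 < p ∧ ∀ t, t + p < ℓ → P (1 + t) = P (1 + t + p)}.Nonempty :=
    ⟨ℓ + 1, by omega, fun t ht => by omega⟩
  rw [hasPeriod_toListP_iff]
  exact Nat.sInf_mem hne

theorem perP_le (hp : 0 < p) (h : (toListP P ℓ).HasPeriod p) : perP P ℓ ≤ p :=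
  Nat.sInf_le ⟨hp, hasPeriod_toListP_iff.1 h⟩

theorem _root_.List.HasPeriod.toListP_extend_right {ℓ' : ℕ} (hp : (toListP P ℓ).HasPeriod p)
    (hd : (toListP P ℓ').HasPeriod d) (hℓ : ℓ' ≤ ℓ) (hpd : p + d ≤ ℓ') (hp0 : 0 < p) :
    (toListP P ℓ).HasPeriod d := by
  rw [hasPeriod_toListP_iff]
  intro t ht
  have hmod : t % p < p := Nat.mod_lt t hp0
  have hmodEq : t ≡ t % p [MOD p] := (Nat.mod_modEq t p).symm
  calc P (1 + t) = P (1 + t % p) := hp.toListP_apply_eq (by omega) (by omega) hmodEq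
    _ = P (1 + t % p + d) := hasPeriod_toListP_iff.1 hd _ (by omega)
    _ = P (1 + t + d) := by
      simp only [add_assoc]
      exact (hp.toListP_apply_eq ht (by omega) (hmodEq.add_right d)).symm

theorem _root_.List.HasPeriod.toListP_extend_left (hPQ : ∀ k, Q k = P (k + 1))
    (hp : (toListP P ℓ).HasPeriod p) (hd : (toListP Q (ℓ - 1)).HasPeriod d) (hdp : d ∣ p)
    (hp0 : 0 < p) (hpℓ : p < ℓ) : (toListP P ℓ).HasPeriod d := by
  have hdle : d ≤ p := Nat.le_of_dvd hp0 hdp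
  have hd0 : 0 < d := Nat.pos_of_dvd_of_pos hdp hp0
  rw [hasPeriod_toListP_iff]
  rintro (_ | t) ht
  · have hmodEq : p - 1 ≡ d - 1 [MOD d] := by
      refine ((Nat.modEq_iff_dvd' (by omega)).2 ?_).symm
      rw [show p - 1 - (d - 1) = p - d by omega]
      exact Nat.dvd_sub hdp dvd_rfl
    calc P (1 + 0) = P (1 + 0 + p) := hasPeriod_toListP_iff.1 hp 0 (by omega)
      _ = Q (1 + (p - 1)) := by rw [hPQ]; congr 1; omega
      _ = Q (1 + (d - 1)) := hd.toListP_apply_eq (by omega) (by omega) hmodEq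
      _ = P (1 + 0 + d) := by rw [hPQ]; congr 1; omega
  · have := hasPeriod_toListP_iff.1 hd t (by omega)
    rw [hPQ, hPQ] at this
    convert this using 2 <;> omega

theorem perP_eq_of_shift (hPQ : ∀ k, Q k = P (k + 1)) (h : perP P ℓ + perP Q ℓ < ℓ) :
    perP P ℓ = perP Q ℓ := by
  obtain ⟨hp0, hp⟩ := perP_pos_and_hasPeriod P ℓ
  obtain ⟨hq0, hq⟩ := perP_pos_and_hasPeriod Q ℓ
  set p := perP P ℓ
  set q := perP Q ℓ
  have hvp : (toListP Q (ℓ - 1)).HasPeriod p := by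
    refine hasPeriod_toListP_iff.2 fun t ht => ?_
    rw [hPQ, hPQ]
    convert hasPeriod_toListP_iff.1 hp (t + 1) (by omega) using 2 <;> omega
  have hvq : (toListP Q (ℓ - 1)).HasPeriod q :=
    hasPeriod_toListP_iff.2 fun t ht => hasPeriod_toListP_iff.1 hq t (by omega)
  have hvd := hvp.gcd hvq (by simp only [length_toListP]; omega)
  have hd0 : 0 < p.gcd q := Nat.gcd_pos_of_pos_left q hp0
  have hdp : p.gcd q ≤ p := Nat.gcd_le_left q hp0
  have hdq : p.gcd q ≤ q := Nat.gcd_le_right (m := p) hq0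
  have := perP_le hd0 (hp.toListP_extend_left hPQ hvd (Nat.gcd_dvd_left p q) hp0 (by omega))
  have := perP_le hd0 (hq.toListP_extend_right hvd (by omega) (by omega) hq0)
  omega

end Periods

section Rotations

theorem rotP_of_shift (hPQ : ∀ k, Q k = P (k + 1)) (p δ : ℕ) :
    rotP Q p δ = rotP P p (δ + 1) := by
  refine List.map_congr_left fun t _ => ?_
  rw [hPQ]
  congr 1
  omega

theorem rotP_of_shift_eq_mod (hPQ : ∀ k, Q k = P (k + 1)) (hp : (toListP P ℓ).HasPeriod p)
    (h2p : 2 * p ≤ ℓ) (hδ : δ < p) : rotP Q p δ = rotP P p ((δ + 1) % p) := by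
  rw [rotP_of_shift hPQ]
  rcases Nat.lt_or_ge (δ + 1) p with hlt | hge
  · rw [Nat.mod_eq_of_lt hlt]
  · rw [show δ + 1 = p by omega, Nat.mod_self]
    refine List.map_congr_left fun t ht => ?_
    have ht : t < p := List.mem_range.1 ht
    rw [hasPeriod_toListP_iff.1 hp t (by omega)]
    congr 1
    omega

theorem hasPeriod_of_rotP_eq (hp : (toListP P ℓ).HasPeriod p) (h2p : 2 * p ≤ ℓ)
    {δ₁ δ₂ : ℕ} (h12 : δ₁ ≤ δ₂) (h₂ : δ₂ < p) (h : rotP P p δ₁ = rotP P p δ₂) :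
    (toListP P ℓ).HasPeriod (δ₂ - δ₁) := by
  have hrot : ∀ s < p, P (1 + (δ₁ + s)) = P (1 + (δ₂ + s)) := fun s hs => by
    simpa [add_assoc] using List.map_inj_left.1 h s (List.mem_range.2 hs)
  rw [hasPeriod_toListP_iff]
  intro x hx
  -- `δ₁ + s` is the representative of `x` modulo `p` in `[δ₁, δ₁ + p)`
  set s := (x + (p - δ₁)) % p
  have hs : s < p := Nat.mod_lt _ (by omega)
  have hxs : x ≡ δ₁ + s [MOD p] := by
    have h1 : δ₁ + s ≡ δ₁ + (x + (p - δ₁)) [MOD p] := (Nat.mod_modEq _ p).add_left δ₁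
    rw [show δ₁ + (x + (p - δ₁)) = x + p by omega] at h1
    exact (h1.trans Nat.add_modEq_right).symm
  calc P (1 + x) = P (1 + (δ₁ + s)) := hp.toListP_apply_eq (by omega) (by omega) hxs
    _ = P (1 + (δ₂ + s)) := hrot s hs
    _ = P (1 + x + (δ₂ - δ₁)) := by
      rw [add_assoc]
      refine hp.toListP_apply_eq (by omega) (by omega) ?_
      rw [show δ₂ + s = δ₁ + s + (δ₂ - δ₁) by omega]
      exact (hxs.add_right _).symm

theorem rotP_injOn (h2p : 2 * perP P ℓ ≤ ℓ) :
    Set.InjOn (rotP P (perP P ℓ)) (Set.Iio (perP P ℓ)) := by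
  intro δ₁ h₁ δ₂ h₂ h
  wlog h12 : δ₁ ≤ δ₂ generalizing δ₁ δ₂
  · exact (this h₂ h₁ h.symm (by omega)).symm
  by_contra hne
  have := perP_le (by omega)
    (hasPeriod_of_rotP_eq (perP_pos_and_hasPeriod P ℓ).2 h2p h12 h₂ h)
  simp only [Set.mem_Iio] at h₁ h₂
  omega

end Rotations

section RunEnd

theorem perP_lt_runendP (τ : ℕ) (P : ℕ → α) (m : ℕ) : perP P (3 * τ - 1) < runendP τ P m := by
  unfold runendP
  omega

theorem runendP_of_shift (hPQ : ∀ k, Q k = P (k + 1))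
    (hper : perP P (3 * τ - 1) = perP Q (3 * τ - 1)) (hpℓ : perP P (3 * τ - 1) < 3 * τ - 1)
    (hpm : perP P (3 * τ - 1) ≤ m) : runendP τ P (m + 1) = runendP τ Q m + 1 := by
  have hP1 : P 1 = P (1 + perP P (3 * τ - 1)) := by
    simpa using hasPeriod_toListP_iff.1 (perP_pos_and_hasPeriod P _).2 0 (by omega)
  unfold runendP
  rw [← hper, Nat.sSup_eq_sSup_add_one (S' := {ℓ | perP P (3 * τ - 1) + ℓ ≤ m ∧
      ∀ t < ℓ, Q (1 + t) = Q (1 + perP P (3 * τ - 1) + t)})]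
  · omega
  · intro k
    simp only [Set.mem_ofPred_eq, Nat.forall_lt_succ_left, hPQ, add_zero, ← add_assoc]
    exact and_congr (by omega) (and_iff_right hP1)
  · exact ⟨0, by simpa using hpm, by simp⟩
  · exact ⟨m, fun x hx => by have := hx.1; omega⟩

end RunEnd

section LyndonRoot

variable [LinearOrder α]

theorem rootP_le_rotP (hδ : δ < perP P (3 * τ - 1)) :
    rootP τ P ≤ rotP P (perP P (3 * τ - 1)) δ :=
  List.min_le_of_le' _ (List.mem_map_of_mem (List.mem_range.2 hδ)) le_rfl

theorem exists_rotP_eq_rootP (τ : ℕ) (P : ℕ → α) :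
    ∃ δ < perP P (3 * τ - 1), rotP P (perP P (3 * τ - 1)) δ = rootP τ P := by
  rcases List.mem_cons.1 (List.foldr_min_mem_cons _ (rotP P (perP P (3 * τ - 1)) 0)) with h | h
  · exact ⟨0, (perP_pos_and_hasPeriod P _).1, h.symm⟩
  · obtain ⟨δ, hδ, h⟩ := List.mem_map.1 h
    exact ⟨δ, List.mem_range.1 hδ, h⟩

theorem headP_lt_and_rotP_eq (τ : ℕ) (P : ℕ → α) :
    headP τ P < perP P (3 * τ - 1) ∧ rotP P (perP P (3 * τ - 1)) (headP τ P) = rootP τ P := by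
  obtain ⟨δ, hδ, h⟩ := exists_rotP_eq_rootP τ P
  exact ⟨(Nat.sInf_le h).trans_lt hδ, Nat.sInf_mem (s := {s | _ = rootP τ P}) ⟨δ, h⟩⟩

theorem tailP_lt_perP (τ : ℕ) (P : ℕ → α) (m : ℕ) : tailP τ P m < perP P (3 * τ - 1) :=
  Nat.mod_lt _ (perP_pos_and_hasPeriod P _).1

theorem rootP_of_shift (hPQ : ∀ k, Q k = P (k + 1))
    (hper : perP P (3 * τ - 1) = perP Q (3 * τ - 1)) (h2p : 2 * perP P (3 * τ - 1) ≤ 3 * τ - 1) :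
    rootP τ P = rootP τ Q := by
  obtain ⟨hp0, hp⟩ := perP_pos_and_hasPeriod P (3 * τ - 1)
  set p := perP P (3 * τ - 1)
  have hrot : ∀ δ < p, rotP Q p δ = rotP P p ((δ + 1) % p) :=
    fun δ hδ => rotP_of_shift_eq_mod hPQ hp h2p hδ
  apply le_antisymm
  · obtain ⟨δ, hδ, hroot⟩ := exists_rotP_eq_rootP τ Q
    rw [← hroot, ← hper, hrot δ (hper ▸ hδ)]
    exact rootP_le_rotP (Nat.mod_lt _ hp0)
  · obtain ⟨δ, hδ, hroot⟩ := exists_rotP_eq_rootP τ P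
    have hpred : ((δ + (p - 1)) % p + 1) % p = δ := by
      rw [Nat.mod_add_mod, show δ + (p - 1) + 1 = δ + p by omega, Nat.add_mod_right,
        Nat.mod_eq_of_lt hδ]
    rw [← hroot, ← hpred, ← hrot _ (Nat.mod_lt _ hp0), hper]
    exact rootP_le_rotP (hper ▸ Nat.mod_lt _ hp0)

theorem headP_of_shift (hPQ : ∀ k, Q k = P (k + 1))
    (hper : perP P (3 * τ - 1) = perP Q (3 * τ - 1)) (h2p : 2 * perP P (3 * τ - 1) ≤ 3 * τ - 1) :
    headP τ P = (headP τ Q + 1) % perP P (3 * τ - 1) := by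
  obtain ⟨hP, hProt⟩ := headP_lt_and_rotP_eq τ P
  obtain ⟨hQ, hQrot⟩ := headP_lt_and_rotP_eq τ Q
  obtain ⟨hp0, hp⟩ := perP_pos_and_hasPeriod P (3 * τ - 1)
  refine rotP_injOn h2p hP (Nat.mod_lt _ hp0) ?_
  rw [hProt, ← rotP_of_shift_eq_mod hPQ hp h2p (hper ▸ hQ), hper, hQrot,
    rootP_of_shift hPQ hper h2p]

theorem tailP_of_shift (hPQ : ∀ k, Q k = P (k + 1))
    (hper : perP P (3 * τ - 1) = perP Q (3 * τ - 1)) (h2p : 2 * perP P (3 * τ - 1) ≤ 3 * τ - 1)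
    (hpm : perP P (3 * τ - 1) ≤ m) : tailP τ P (m + 1) = tailP τ Q m := by
  have hhead : headP τ Q < perP P (3 * τ - 1) := hper ▸ (headP_lt_and_rotP_eq τ Q).1
  have hR : perP P (3 * τ - 1) < runendP τ Q m := hper ▸ perP_lt_runendP τ Q m
  unfold tailP
  rw [runendP_of_shift hPQ hper (by omega) hpm, headP_of_shift hPQ hper h2p, ← hper]
  set p := perP P (3 * τ - 1)
  set R := runendP τ Q m
  rcases Nat.lt_or_ge (headP τ Q + 1) p with hlt | hge
  · rw [Nat.mod_eq_of_lt hlt]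
    congr 1
    omega
  · rw [show headP τ Q + 1 = p by omega, Nat.mod_self,
      show R + 1 - 1 - 0 = R - 1 - headP τ Q + p by omega, Nat.add_mod_right]

theorem runendfullP_of_shift (hPQ : ∀ k, Q k = P (k + 1))
    (hper : perP P (3 * τ - 1) = perP Q (3 * τ - 1)) (h2p : 2 * perP P (3 * τ - 1) ≤ 3 * τ - 1)
    (hpm : perP P (3 * τ - 1) ≤ m) : runendfullP τ P (m + 1) = runendfullP τ Q m + 1 := by
  have := tailP_lt_perP τ Q m
  have := perP_lt_runendP τ Q m
  unfold runendfullP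
  rw [tailP_of_shift hPQ hper h2p hpm, runendP_of_shift hPQ hper (by omega) hpm]
  omega

theorem typePosP_of_shift (hPQ : ∀ k, Q k = P (k + 1))
    (hper : perP P (3 * τ - 1) = perP Q (3 * τ - 1)) (hpℓ : perP P (3 * τ - 1) < 3 * τ - 1)
    (hpm : perP P (3 * τ - 1) ≤ m) : typePosP τ P (m + 1) ↔ typePosP τ Q m := by
  have := perP_lt_runendP τ Q m
  unfold typePosP
  rw [runendP_of_shift hPQ hper hpℓ hpm, hper, hPQ (runendP τ Q m),
    hPQ (runendP τ Q m - perP Q (3 * τ - 1)),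
    show runendP τ Q m + 1 - perP Q (3 * τ - 1) = runendP τ Q m - perP Q (3 * τ - 1) + 1 by omega]
  exact and_congr (by omega) Iff.rfl

end LyndonRoot

theorem sufP_pred_succ (T : ℕ → α) {j : ℕ} (hj : 1 ≤ j) (k : ℕ) :
    sufP T j k = sufP T (j - 1) (k + 1) := by
  unfold sufP
  congr 1
  omega

end LZ

open LZ in
theorem run_invariants_shift_general {α : Type*} [LinearOrder α] (τ n : ℕ) (T : ℕ → α)
    (j : ℕ) (hj : j ∈ Rset τ n T) (hj' : j - 1 ∈ Rset τ n T) :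
    rootT τ T (j - 1) = rootT τ T j ∧
    runEndT τ n T (j - 1) = runEndT τ n T j ∧
    tailT τ n T (j - 1) = tailT τ n T j ∧
    runEndFullT τ n T (j - 1) = runEndFullT τ n T j ∧
    (typePosT τ n T (j - 1) ↔ typePosT τ n T j) := by
  obtain ⟨hj1, -, hPτ⟩ := hj'
  obtain ⟨-, hjn, hQτ⟩ := hj
  have hPQ := sufP_pred_succ T (j := j) (by omega)
  have hp0 := (perP_pos_and_hasPeriod (sufP T (j - 1)) (3 * τ - 1)).1
  have hq0 := (perP_pos_and_hasPeriod (sufP T j) (3 * τ - 1)).1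
  have hper := perP_eq_of_shift (ℓ := 3 * τ - 1) hPQ (by omega)
  have hpm : perP (sufP T (j - 1)) (3 * τ - 1) ≤ n + 1 - j := by omega
  have hm : n + 1 - (j - 1) = n + 1 - j + 1 := by omega
  simp only [rootT, runEndT, tailT, runEndFullT, typePosT, hm]
  refine ⟨rootP_of_shift hPQ hper (by omega), ?_, tailP_of_shift hPQ hper (by omega) hpm, ?_,
    typePosP_of_shift hPQ hper (by omega) hpm⟩
  · rw [runendP_of_shift hPQ hper (by omega) hpm]
    omega
  · rw [runendfullP_of_shift hPQ hper (by omega) hpm]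
    omega

open LZ in
/-- For `τ ∈ [1..⌊n/2⌋]` and every position `j` with both `j` and
`j - 1` in `R(τ,T)`, the `τ`-runs at `j-1` and `j` agree: same Lyndon root, same
run end, same tail, same full run end, and same type. -/
theorem run_invariants_shift {α : Type*} [LinearOrder α] (τ n : ℕ) (T : ℕ → α)
    (hτ : 1 ≤ τ) (hn : 2 * τ ≤ n)
    (j : ℕ) (hj : j ∈ Rset τ n T) (hj' : j - 1 ∈ Rset τ n T) :
    rootT τ T (j - 1) = rootT τ T j ∧
    runEndT τ n T (j - 1) = runEndT τ n T j ∧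
    tailT τ n T (j - 1) = tailT τ n T j ∧
    runEndFullT τ n T (j - 1) = runEndFullT τ n T j ∧
    (typePosT τ n T (j - 1) ↔ typePosT τ n T j) :=
  run_invariants_shift_general τ n T j hj hj'
end

section
/- Let τ ∈ [1..⌊n/2⌋] and j ∈ R(τ,T). Then e(j) = max{j' ∈ [j..n] : [j..j'] ⊆ R(τ,T)} + 3τ - 1, i.e., the run end equals 3τ - 1 plus the last position of the maximal block of R(τ,T)-positions containing j. -/
/-- Iterating a period `g` on `[0, N]`. -/
private lemma chainLem {α : Type*} (f : ℕ → α) (g N : ℕ)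
    (hper : ∀ i, i + g ≤ N → f i = f (i + g)) :
    ∀ d x, x + g * d ≤ N → f x = f (x + g * d) := by
  intro d
  induction d with
  | zero => intro x _; simp
  | succ d ih =>
    intro x h
    have hgd : g * (d + 1) = g * d + g := by ring
    calc f x = f (x + g) := hper x (by omega)
      _ = f (x + g + g * d) := ih (x + g) (by omega)
      _ = f (x + g * (d + 1)) := by congr 1; omega

/-- Fine–Wilf periodicity lemma on `[0, N]` (with the generous bound `p + q ≤ N`). -/
private lemma finewilf {α : Type*} (f : ℕ → α) :
    ∀ s p q N, p + q ≤ s → 0 < p → 0 < q → p + q ≤ N →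
    (∀ i, i + p ≤ N → f i = f (i + p)) →
    (∀ i, i + q ≤ N → f i = f (i + q)) →
    ∀ i, i + Nat.gcd p q ≤ N → f i = f (i + Nat.gcd p q) := by
  intro s
  induction s with
  | zero => intro p q N h hp hq; omega
  | succ s ih =>
    intro p q N hs hp hq hpq hfp hfq
    rcases Nat.lt_trichotomy p q with h | h | h
    · -- p < q : reduce to periods (p, q - p)
      have hnew : ∀ i, i + (q - p) ≤ N → f i = f (i + (q - p)) := by
        intro i hi
        by_cases hc : i + q ≤ N
        · have e1 : f i = f (i + q) := hfq i hc
          have e2 : f (i + (q - p)) = f (i + (q - p) + p) := hfp _ (by omega)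
          have e3 : i + (q - p) + p = i + q := by omega
          rw [e1, e2, e3]
        · have e1 : f (i - p) = f (i - p + p) := hfp _ (by omega)
          have e2 : f (i - p) = f (i - p + q) := hfq _ (by omega)
          have h3 : i - p + p = i := by omega
          have h4 : i - p + q = i + (q - p) := by omega
          rw [h3] at e1
          rw [h4] at e2
          rw [← e1, e2]
      have hg : Nat.gcd p q = Nat.gcd p (q - p) := (Nat.gcd_sub_self_right h.le).symm
      intro i hi
      rw [hg] at hi ⊢
      exact ih p (q - p) N (by omega) hp (by omega) (by omega) hfp hnew i hi
    · subst h
      intro i hi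
      rw [Nat.gcd_self]
      exact hfp i (by rwa [Nat.gcd_self] at hi)
    · -- q < p : reduce to periods (p - q, q)
      have hnew : ∀ i, i + (p - q) ≤ N → f i = f (i + (p - q)) := by
        intro i hi
        by_cases hc : i + p ≤ N
        · have e1 : f i = f (i + p) := hfp i hc
          have e2 : f (i + (p - q)) = f (i + (p - q) + q) := hfq _ (by omega)
          have e3 : i + (p - q) + q = i + p := by omega
          rw [e1, e2, e3]
        · have e1 : f (i - q) = f (i - q + q) := hfq _ (by omega)
          have e2 : f (i - q) = f (i - q + p) := hfp _ (by omega)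
          have h3 : i - q + q = i := by omega
          have h4 : i - q + p = i + (p - q) := by omega
          rw [h3] at e1
          rw [h4] at e2
          rw [← e1, e2]
      have hg : Nat.gcd p q = Nat.gcd (p - q) q := (Nat.gcd_sub_self_left h.le).symm
      intro i hi
      rw [hg] at hi ⊢
      exact ih (p - q) q N (by omega) (by omega) hq (by omega) hnew hfq i hi

private lemma perP_spec {α : Type*} (T : ℕ → α) (τ : ℕ) (hτ : 1 ≤ τ) (i : ℕ) :
    0 < LZ.perP (LZ.sufP T i) (3 * τ - 1) ∧
      ∀ t, t + LZ.perP (LZ.sufP T i) (3 * τ - 1) < 3 * τ - 1 →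
        LZ.sufP T i (1 + t) =
          LZ.sufP T i (1 + t + LZ.perP (LZ.sufP T i) (3 * τ - 1)) := by
  have hne : {p | 0 < p ∧ ∀ t, t + p < 3 * τ - 1 →
      LZ.sufP T i (1 + t) = LZ.sufP T i (1 + t + p)}.Nonempty :=
    ⟨3 * τ - 1, by omega, fun t ht => absurd ht (by omega)⟩
  exact Nat.sInf_mem hne

open LZ in
/-- For `τ ∈ [1..⌊n/2⌋]` and `j ∈ R(τ,T)`, the run end satisfies
`e(j) = max {j' ∈ [j..n] : [j..j'] ⊆ R(τ,T)} + 3τ - 1`. -/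
theorem runEnd_eq_block_end {α : Type*} [LinearOrder α] (τ n : ℕ) (T : ℕ → α)
    (hτ : 1 ≤ τ) (hn : 2 * τ ≤ n)
    (j : ℕ) (hj : j ∈ Rset τ n T) :
    runEndT τ n T j =
      sSup {j' | j ≤ j' ∧ j' ≤ n ∧ ∀ t, j ≤ t → t ≤ j' → t ∈ Rset τ n T}
        + 3 * τ - 1 := by
  classical
  obtain ⟨hj1, hj2, hj3⟩ := hj
  set p := perP (sufP T j) (3 * τ - 1) with hpdef
  obtain ⟨hp0, hpper⟩ := perP_spec T τ hτ j
  rw [← hpdef] at hp0 hpper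
  have hτ3 : 3 ≤ τ := by omega
  -- the lcp set
  set A := {ℓ | p + ℓ ≤ n + 1 - j ∧
      ∀ t < ℓ, sufP T j (1 + t) = sufP T j (1 + p + t)} with hAdef
  have hAbdd : BddAbove A := ⟨n + 1 - j, fun ℓ hℓ => by have := hℓ.1; omega⟩
  have hA0 : (3 * τ - 1 - p) ∈ A := by
    constructor
    · omega
    · intro t ht
      have h := hpper t (by omega)
      have e3 : (1 : ℕ) + t + p = 1 + p + t := by omega
      rwa [e3] at h
  set L := sSup A with hLdef
  have hLA : L ∈ A := Nat.sSup_mem ⟨_, hA0⟩ hAbdd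
  obtain ⟨hL1, hL2⟩ := hLA
  have hLlb : 3 * τ - 1 - p ≤ L := le_csSup hAbdd hA0
  have hpτ : p ≤ τ := by omega
  -- translate to the text
  have hsuf : ∀ i a : ℕ, 1 ≤ i → sufP T i (1 + a) = T (i + a) := by
    intro i a _
    show T (i + (1 + a) - 1) = T (i + a)
    congr 1; omega
  have hL2' : ∀ t, t < L → T (j + t) = T (j + p + t) := by
    intro t ht
    have h := hL2 t ht
    have e1 : sufP T j (1 + t) = T (j + t) := hsuf j t hj1
    have e2 : sufP T j (1 + p + t) = T (j + p + t) := by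
      have e3 : (1 : ℕ) + p + t = 1 + (p + t) := by omega
      rw [e3, hsuf j (p + t) hj1, ← Nat.add_assoc]
    rw [e1, e2] at h
    exact h
  have hrun : ∀ i, j ≤ i → i + p < j + p + L → T i = T (i + p) := by
    intro i h1 h2
    have h := hL2' (i - j) (by omega)
    have e1 : j + (i - j) = i := by omega
    have e2 : j + p + (i - j) = i + p := by omega
    rw [e1, e2] at h
    exact h
  have he1 : j + (3 * τ - 1) ≤ j + p + L := by omega
  have he2 : j + p + L ≤ n + 1 := by omega
  -- rewrite the run end
  have hRE : runEndT τ n T j = j + p + L := by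
    show j + runendP τ (sufP T j) (n + 1 - j) - 1 = j + p + L
    rw [runendP, ← hpdef, ← hAdef, ← hLdef]
    omega
  rw [hRE]
  -- the block supremum
  have hmem : (j + p + L + 1 - 3 * τ) ∈
      {j' | j ≤ j' ∧ j' ≤ n ∧ ∀ t, j ≤ t → t ≤ j' → t ∈ Rset τ n T} := by
    refine ⟨by omega, by omega, ?_⟩
    intro t ht1 ht2
    have hper_t : perP (sufP T t) (3 * τ - 1) ≤ p := by
      apply Nat.sInf_le
      refine ⟨hp0, ?_⟩
      intro s hs
      have h := hrun (t + s) (by omega) (by omega)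
      have e1 : sufP T t (1 + s) = T (t + s) := hsuf t s (by omega)
      have e2 : sufP T t (1 + s + p) = T (t + s + p) := by
        have e3 : (1 : ℕ) + s + p = 1 + (s + p) := by omega
        rw [e3, hsuf t (s + p) (by omega), ← Nat.add_assoc]
      rw [e1, e2]
      exact h
    exact ⟨by omega, by omega, by omega⟩
  have hub : ∀ j' ∈ {j' | j ≤ j' ∧ j' ≤ n ∧ ∀ t, j ≤ t → t ≤ j' → t ∈ Rset τ n T},
      j' ≤ j + p + L + 1 - 3 * τ := by
    rintro j' ⟨hj'1, hj'2, hj'3⟩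
    by_contra hgt
    push_neg at hgt
    set k := j + p + L + 2 - 3 * τ with hkdef
    have hkj : j + 1 ≤ k := by omega
    obtain ⟨hk1, hk2, hk3⟩ := hj'3 k (by omega) (by omega)
    have hen : j + p + L ≤ n := by omega
    set q := perP (sufP T k) (3 * τ - 1) with hqdef
    obtain ⟨hq0, hqper⟩ := perP_spec T τ hτ k
    rw [← hqdef] at hq0 hqper
    have hke : k + (3 * τ - 2) = j + p + L := by omega
    have hqrun : ∀ i, k ≤ i → i + q ≤ j + p + L → T i = T (i + q) := by
      intro i h1 h2
      have h := hqper (i - k) (by omega)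
      have e1 : sufP T k (1 + (i - k)) = T i := by
        show T (k + (1 + (i - k)) - 1) = T i
        congr 1; omega
      have e2 : sufP T k (1 + (i - k) + q) = T (i + q) := by
        show T (k + (1 + (i - k) + q) - 1) = T (i + q)
        congr 1; omega
      rw [e1, e2] at h
      exact h
    -- mismatch at the end of the lcp
    have hnotin : L + 1 ∉ A := by
      intro hmemA
      have := le_csSup hAbdd hmemA
      omega
    have hfst : p + (L + 1) ≤ n + 1 - j := by omega
    have hne : sufP T j (1 + L) ≠ sufP T j (1 + p + L) := by
      intro heq
      apply hnotin
      refine ⟨hfst, ?_⟩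
      intro t ht
      rcases Nat.lt_or_ge t L with h' | h'
      · exact hL2 t h'
      · have : t = L := by omega
        rw [this]
        exact heq
    apply hne
    -- Fine–Wilf on the window [k, k + 3τ - 3]
    set f : ℕ → α := fun s => T (k + s) with hfdef
    have hfp : ∀ i, i + p ≤ 3 * τ - 3 → f i = f (i + p) := by
      intro i hi
      have h := hrun (k + i) (by omega) (by omega)
      have e2 : T (k + i + p) = f (i + p) := by
        show T (k + i + p) = T (k + (i + p))
        congr 1; omega
      rw [← e2]
      exact h
    have hfq : ∀ i, i + q ≤ 3 * τ - 3 → f i = f (i + q) := by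
      intro i hi
      have h := hqrun (k + i) (by omega) (by omega)
      have e2 : T (k + i + q) = f (i + q) := by
        show T (k + i + q) = T (k + (i + q))
        congr 1; omega
      rw [← e2]
      exact h
    have hgper := finewilf f (p + q) p q (3 * τ - 3) le_rfl hp0 hq0 (by omega) hfp hfq
    have hchain := chainLem f (Nat.gcd p q) (3 * τ - 3) hgper
    have hgp : Nat.gcd p q ∣ p := Nat.gcd_dvd_left _ _
    have hgq : Nat.gcd p q ∣ q := Nat.gcd_dvd_right _ _
    have hg0 : 0 < Nat.gcd p q := Nat.gcd_pos_of_pos_left _ hp0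
    have hqτ : q ≤ τ := by omega
    -- key equality T (e - p) = T (e - q) via gcd chain
    have key : T (k + (3 * τ - 2 - p)) = T (k + (3 * τ - 2 - q)) := by
      rcases Nat.le_total p q with hle | hle
      · -- e - q ≤ e - p
        have hd : Nat.gcd p q ∣ q - p := Nat.dvd_sub hgq hgp
        have hmul : Nat.gcd p q * ((q - p) / Nat.gcd p q) = q - p :=
          Nat.mul_div_cancel' hd
        have h := hchain ((q - p) / Nat.gcd p q) (3 * τ - 2 - q) (by omega)
        have e1 : 3 * τ - 2 - q + Nat.gcd p q * ((q - p) / Nat.gcd p q)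
            = 3 * τ - 2 - p := by omega
        rw [e1] at h
        exact h.symm
      · have hd : Nat.gcd p q ∣ p - q := Nat.dvd_sub hgp hgq
        have hmul : Nat.gcd p q * ((p - q) / Nat.gcd p q) = p - q :=
          Nat.mul_div_cancel' hd
        have h := hchain ((p - q) / Nat.gcd p q) (3 * τ - 2 - p) (by omega)
        have e1 : 3 * τ - 2 - p + Nat.gcd p q * ((p - q) / Nat.gcd p q)
            = 3 * τ - 2 - q := by omega
        rw [e1] at h
        exact h
    have hlast : T (j + p + L - q) = T (j + p + L) := by
      have h := hqrun (j + p + L - q) (by omega) (by omega)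
      have e1 : j + p + L - q + q = j + p + L := by omega
      rw [e1] at h
      exact h
    have e1 : sufP T j (1 + L) = T (k + (3 * τ - 2 - p)) := by
      show T (j + (1 + L) - 1) = T (k + (3 * τ - 2 - p))
      congr 1; omega
    have e2 : T (k + (3 * τ - 2 - q)) = T (j + p + L - q) := by
      congr 1; omega
    have e3 : T (j + p + L) = sufP T j (1 + p + L) := by
      show T (j + p + L) = T (j + (1 + p + L) - 1)
      congr 1; omega
    rw [e1, key, e2, hlast, e3]
  have hSup : sSup {j' | j ≤ j' ∧ j' ≤ n ∧ ∀ t, j ≤ t → t ≤ j' → t ∈ Rset τ n T}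
      = j + p + L + 1 - 3 * τ := by
    refine le_antisymm (csSup_le ⟨_, hmem⟩ hub) (le_csSup ?_ hmem)
    exact ⟨n, fun j' hj' => hj'.2.1⟩
  rw [hSup]
  omega
end

section
/- Let τ ∈ [1..⌊n/2⌋]. Let j, j', j'' ∈ [1..n] be such that j, j'' ∈ R(τ,T), j' ∉ R(τ,T), and j < j' < j''. Then e(j) ≤ j'' + τ - 1, where e(j) is the end of the τ-run at j. -/
namespace LZaux
open LZ
lemma perP_spec {α : Type*} (P : ℕ → α) (ℓ : ℕ) :
    0 < perP P ℓ ∧ ∀ t, t + perP P ℓ < ℓ → P (1 + t) = P (1 + t + perP P ℓ) := by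
  have h : (max ℓ 1) ∈ {p | 0 < p ∧ ∀ t, t + p < ℓ → P (1 + t) = P (1 + t + p)} := by
    refine ⟨?_, ?_⟩
    · have := le_max_right ℓ 1; omega
    · intro t ht
      have := le_max_left ℓ 1
      omega
  exact Nat.sInf_mem ⟨_, h⟩
end LZaux

open LZ in
/-- For `τ ∈ [1..⌊n/2⌋]`, if `j, j'' ∈ R(τ,T)`, `j' ∉ R(τ,T)` and
`j < j' < j''`, then `e(j) ≤ j'' + τ - 1`. -/
theorem runEnd_bound_across_gap {α : Type*} [LinearOrder α] (τ n : ℕ) (T : ℕ → α)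
    (hτ : 1 ≤ τ) (hn : 2 * τ ≤ n)
    (j j' j'' : ℕ) (hj : j ∈ Rset τ n T) (hj'' : j'' ∈ Rset τ n T)
    (hj' : j' ∉ Rset τ n T) (h1 : j < j') (h2 : j' < j'')
    (hrange : 1 ≤ j ∧ j'' ≤ n) :
    runEndT τ n T j + 1 ≤ j'' + τ := by
  simp only [Rset, Set.mem_setOf_eq] at hj hj'' hj'
  obtain ⟨hj1, hjn, hjp⟩ := hj
  obtain ⟨hj1'', hjn'', hjp''⟩ := hj''
  by_contra hcon
  push_neg at hcon
  set p := perP (sufP T j) (3 * τ - 1) with hpdef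
  set p'' := perP (sufP T j'') (3 * τ - 1) with hp''def
  have hspec := LZaux.perP_spec (sufP T j) (3 * τ - 1)
  have hspec'' := LZaux.perP_spec (sufP T j'') (3 * τ - 1)
  rw [← hpdef] at hspec
  rw [← hp''def] at hspec''
  obtain ⟨hp0, hpper⟩ := hspec
  obtain ⟨hp0'', hpper''⟩ := hspec''
  -- the periodicity of the window at j'' in terms of T
  have hPj'' : ∀ t, t + p'' < 3 * τ - 1 → T (j'' + t) = T (j'' + t + p'') := by
    intro t ht
    have h := hpper'' t ht
    have h' : T (j'' + (1 + t) - 1) = T (j'' + (1 + t + p'') - 1) := h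
    have e1 : j'' + (1 + t) - 1 = j'' + t := by omega
    have e2 : j'' + (1 + t + p'') - 1 = j'' + t + p'' := by omega
    rw [e1, e2] at h'
    exact h'
  set L := sSup {ℓ | p + ℓ ≤ n + 1 - j ∧
      ∀ t < ℓ, sufP T j (1 + t) = sufP T j (1 + p + t)} with hLdef
  have hLmem : p + L ≤ n + 1 - j ∧
      ∀ t < L, sufP T j (1 + t) = sufP T j (1 + p + t) := by
    rw [hLdef]
    have hne : ({ℓ | p + ℓ ≤ n + 1 - j ∧
        ∀ t < ℓ, sufP T j (1 + t) = sufP T j (1 + p + t)}).Nonempty := by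
      refine ⟨0, ?_, ?_⟩
      · omega
      · intro t ht; omega
    have hbdd : BddAbove {ℓ | p + ℓ ≤ n + 1 - j ∧
        ∀ t < ℓ, sufP T j (1 + t) = sufP T j (1 + p + t)} :=
      ⟨n + 1 - j, fun ℓ hℓ => by have := hℓ.1; omega⟩
    exact Nat.sSup_mem hne hbdd
  have hre : runEndT τ n T j = j + (1 + p + L) - 1 := rfl
  rw [hre] at hcon
  -- hcon now gives j'' + τ ≤ j + p + L
  have hcon' : j'' + τ ≤ j + p + L := by omega
  -- one-step periodicity inside the run
  have hrun : ∀ x, j ≤ x → x < j + L → T x = T (x + p) := by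
    intro x hx hxL
    have h := hLmem.2 (x - j) (by omega)
    have h' : T (j + (1 + (x - j)) - 1) = T (j + (1 + p + (x - j)) - 1) := h
    have e1 : j + (1 + (x - j)) - 1 = x := by omega
    have e2 : j + (1 + p + (x - j)) - 1 = x + p := by omega
    rw [e1, e2] at h'
    exact h'
  -- multi-step shift inside the run
  have hshift : ∀ s x, p ∣ s → j ≤ x → x + s < j + p + L → T x = T (x + s) := by
    intro s
    induction s using Nat.strong_induction_on with
    | _ s ih =>
      intro x hdvd hx hlt
      rcases Nat.eq_zero_or_pos s with hs | hs
      · subst hs; simp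
      · have hps : p ≤ s := Nat.le_of_dvd hs hdvd
        have ha : T x = T (x + p) := hrun x hx (by omega)
        have hb : T (x + p) = T (x + p + (s - p)) :=
          ih (s - p) (by omega) (x + p) (Nat.dvd_sub hdvd dvd_rfl) (by omega) (by omega)
        rw [ha, hb]; congr 1; omega
  -- existence of a multiple of p in any window of length p
  have hex : ∀ d : ℕ, ∃ s, p ∣ s ∧ d ≤ s ∧ s < d + p := by
    intro d
    induction d with
    | zero => exact ⟨0, dvd_zero p, le_refl 0, by omega⟩
    | succ d ih =>
      obtain ⟨s, hds, hd1, hd2⟩ := ih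
      by_cases hc : d + 1 ≤ s
      · exact ⟨s, hds, hc, by omega⟩
      · exact ⟨s + p, dvd_add hds dvd_rfl, by omega, by omega⟩
  -- derive a contradiction: j' would be in Rset
  apply hj'
  refine ⟨by omega, by omega, ?_⟩
  have hmem : perP (sufP T j') (3 * τ - 1) ≤ p'' := by
    apply Nat.sInf_le
    refine ⟨hp0'', ?_⟩
    intro t ht
    have key : T (j' + t) = T (j' + t + p'') := by
      by_cases hcase : j'' ≤ j' + t
      · have h := hPj'' (j' + t - j'') (by omega)
        have e1 : j'' + (j' + t - j'') = j' + t := by omega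
        rw [e1] at h
        exact h
      · obtain ⟨s, hds, hs1, hs2⟩ := hex (j'' - (j' + t))
        have hb1 : T (j' + t) = T (j' + t + s) :=
          hshift s (j' + t) hds (by omega) (by omega)
        have hb2 : T (j' + t + p'') = T (j' + t + p'' + s) :=
          hshift s (j' + t + p'') hds (by omega) (by omega)
        have hb3 : T (j' + t + s) = T (j' + t + s + p'') := by
          have h := hPj'' (j' + t + s - j'') (by omega)
          have e1 : j'' + (j' + t + s - j'') = j' + t + s := by omega
          rw [e1] at h
          exact h
        have e : j' + t + s + p'' = j' + t + p'' + s := by omega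
        rw [hb1, hb3, e, ← hb2]
    have e1 : j' + (1 + t) - 1 = j' + t := by omega
    have e2 : j' + (1 + t + p'') - 1 = j' + t + p'' := by omega
    show T (j' + (1 + t) - 1) = T (j' + (1 + t + p'') - 1)
    rw [e1, e2]
    exact key
  omega
end

section
/- Let τ ∈ [1..⌊n/2⌋]. For any two distinct starting positions j ≠ j' of maximal τ-runs (i.e., j, j' ∈ R'(τ,T)), the full run ends differ: efull(j) ≠ efull(j'). -/
section Aux
open LZ
variable {α : Type*} [LinearOrder α]

lemma LZaux.mem_Rset_of_period (τ n : ℕ) (T : ℕ → α) (i q : ℕ)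
    (h1 : 1 ≤ i) (h2 : i + 3 * τ ≤ n + 2) (hq : 0 < q) (hq3 : 3 * q ≤ τ)
    (hper : ∀ t, t + q + 1 < 3 * τ → T (i + t) = T (i + t + q)) :
    i ∈ Rset τ n T := by
  refine ⟨h1, h2, ?_⟩
  have hle : perP (sufP T i) (3 * τ - 1) ≤ q := by
    apply Nat.sInf_le
    refine ⟨hq, fun t ht => ?_⟩
    have h := hper t (by omega)
    have e1 : i + (1 + t) - 1 = i + t := by omega
    have e2 : i + (1 + t + q) - 1 = i + t + q := by omega
    show T (i + (1 + t) - 1) = T (i + (1 + t + q) - 1)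
    rw [e1, e2]; exact h
  omega

lemma LZaux.run_facts (τ n : ℕ) (T : ℕ → α) (hτ : 1 ≤ τ) (j : ℕ)
    (hj : j ∈ Rset τ n T) :
    ∃ p, p = perP (sufP T j) (3 * τ - 1) ∧
    1 ≤ p ∧ 3 * p ≤ τ ∧ j + (3 * τ - 1) ≤ runEndT τ n T j ∧
    runEndFullT τ n T j ≤ runEndT τ n T j ∧
    runEndT τ n T j < runEndFullT τ n T j + p ∧
    ∀ x, j ≤ x → x + p < runEndT τ n T j → T x = T (x + p) := by
  obtain ⟨h1, h2, h3⟩ := hj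
  set P := sufP T j with hP
  set p := perP P (3 * τ - 1) with hp
  have hSne : {q | 0 < q ∧ ∀ t, t + q < 3 * τ - 1 → P (1 + t) = P (1 + t + q)}.Nonempty :=
    ⟨3 * τ - 1, by omega, fun t ht => absurd ht (by omega)⟩
  have hmem : 0 < p ∧ ∀ t, t + p < 3 * τ - 1 → P (1 + t) = P (1 + t + p) := by
    rw [hp]; unfold perP; exact Nat.sInf_mem hSne
  have hple : p ≤ 3 * τ - 1 := by
    rw [hp]; unfold perP
    exact Nat.sInf_le ⟨by omega, fun t ht => absurd ht (by omega)⟩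
  set L := sSup {ℓ | p + ℓ ≤ n + 1 - j ∧ ∀ t < ℓ, P (1 + t) = P (1 + p + t)} with hLdef
  have hrun : runendP τ P (n + 1 - j) = 1 + p + L := by
    unfold runendP; rw [← hp, ← hLdef]
  have hbdd : BddAbove {ℓ | p + ℓ ≤ n + 1 - j ∧ ∀ t < ℓ, P (1 + t) = P (1 + p + t)} :=
    ⟨n + 1 - j, fun ℓ hℓ => by have := hℓ.1; omega⟩
  have hne2 : {ℓ | p + ℓ ≤ n + 1 - j ∧ ∀ t < ℓ, P (1 + t) = P (1 + p + t)}.Nonempty :=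
    ⟨0, by omega, fun t ht => absurd ht (by omega)⟩
  have hLmem : p + L ≤ n + 1 - j ∧ ∀ t < L, P (1 + t) = P (1 + p + t) := by
    rw [hLdef]; exact Nat.sSup_mem hne2 hbdd
  have hLge : 3 * τ - 1 - p ≤ L := by
    rw [hLdef]
    refine le_csSup hbdd ⟨by omega, fun t ht => ?_⟩
    rw [show 1 + p + t = 1 + t + p by ring]
    exact hmem.2 t (by omega)
  have hE : runEndT τ n T j = j + p + L := by
    unfold runEndT; rw [← hP, hrun]; omega
  have htl : tailP τ P (n + 1 - j) < p := by
    unfold tailP; rw [← hp]; exact Nat.mod_lt _ (by omega)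
  have hF : runEndFullT τ n T j = j + (1 + p + L - tailP τ P (n + 1 - j)) - 1 := by
    unfold runEndFullT runendfullP; rw [← hP, hrun]
  have hperiod : ∀ x, j ≤ x → x + p < runEndT τ n T j → T x = T (x + p) := by
    intro x hx hxe
    rw [hE] at hxe
    have h := hLmem.2 (x - j) (by omega)
    rw [hP] at h
    simp only [sufP] at h
    have e1 : j + (1 + (x - j)) - 1 = x := by omega
    have e2 : j + (1 + p + (x - j)) - 1 = x + p := by omega
    rw [e1, e2] at h
    exact h
  exact ⟨p, hp, by omega, h3, by omega, by omega, by omega, hperiod⟩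

lemma LZaux.key (τ n : ℕ) (T : ℕ → α) (hτ : 1 ≤ τ)
    (j j' : ℕ) (hj : j ∈ Rprim τ n T) (hj' : j' ∈ Rprim τ n T) (hlt : j < j') :
    runEndFullT τ n T j ≠ runEndFullT τ n T j' := by
  intro hf
  obtain ⟨hjR, -⟩ := hj
  obtain ⟨hj'R, hj'p⟩ := hj'
  obtain ⟨p, -, hp1, hp3, he1, hfe, hef, hper⟩ := LZaux.run_facts τ n T hτ j hjR
  obtain ⟨p', -, hp1', hp3', he1', hfe', hef', hper'⟩ := LZaux.run_facts τ n T hτ j' hj'R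
  rw [← hf] at hfe' hef'
  have hj1 : 1 ≤ j := hjR.1
  have hj'2 : j' + 3 * τ ≤ n + 2 := hj'R.2.1
  have hfge : j' + 3 * τ - p' ≤ runEndFullT τ n T j := by omega
  have claim : ∀ k x, j' - x ≤ k → j ≤ x → x + p' < runEndT τ n T j →
      x + p' < runEndT τ n T j' → T x = T (x + p') := by
    intro k
    induction k with
    | zero =>
      intro x hk hx hxe hxe'
      exact hper' x (by omega) hxe'
    | succ k ih =>
      intro x hk hx hxe hxe'
      by_cases hxj : j' ≤ x
      · exact hper' x hxj hxe'
      · push_neg at hxj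
        have h1 : T x = T (x + p) := hper x hx (by omega)
        have h3 : T (x + p) = T (x + p + p') :=
          ih (x + p) (by omega) (by omega) (by omega) (by omega)
        have h2 : T (x + p') = T (x + p' + p) := hper (x + p') (by omega) (by omega)
        rw [h1, h3, show x + p + p' = x + p' + p by ring, ← h2]
  have hwin : ∀ t, t + p' + 1 < 3 * τ → T (j' - 1 + t) = T (j' - 1 + t + p') := by
    intro t ht
    rcases Nat.eq_zero_or_pos t with rfl | htpos
    · simpa using claim 1 (j' - 1) (by omega) (by omega) (by omega) (by omega)
    · exact hper' (j' - 1 + t) (by omega) (by omega)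
  exact hj'p (LZaux.mem_Rset_of_period τ n T (j' - 1) p' (by omega) (by omega)
    (by omega) hp3' hwin)

end Aux

open LZ in
/-- For `τ ∈ [1..⌊n/2⌋]` and any two distinct starting positions
`j ≠ j'` of maximal `τ`-runs, the full run ends differ: `efull(j) ≠ efull(j')`. -/
theorem runEndFull_injective {α : Type*} [LinearOrder α] (τ n : ℕ) (T : ℕ → α)
    (hτ : 1 ≤ τ) (hn : 2 * τ ≤ n)
    (j j' : ℕ) (hj : j ∈ Rprim τ n T) (hj' : j' ∈ Rprim τ n T) (hne : j ≠ j') :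
    runEndFullT τ n T j ≠ runEndFullT τ n T j' := by
  rcases lt_or_gt_of_ne hne with h | h
  · exact LZaux.key τ n T hτ j j' hj hj' h
  · exact (LZaux.key τ n T hτ j' j hj' hj h).symm
end

section
/- Let τ ∈ [1..⌊n/2⌋], let j ∈ R(τ,T), and let ℓ > 0 be such that e(j) < j + ℓ ≤ n + 1. Then P := T[j..j+ℓ) is a τ-periodic pattern with runend(P) ≤ |P|, and its head, root, run end offset, full run end offset, exponent, tail, and type all equal the corresponding quantities of position j in T. -/
open LZ in
/-- Let `τ ∈ [1..⌊n/2⌋]`, `j ∈ R(τ,T)`, and `ℓ > 0` with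
`e(j) < j + ℓ ≤ n + 1` (and `T[n]` not occurring in `T[1..n)`). Then
`P := T[j..j+ℓ)` is a `τ`-periodic pattern with `runend(P) ≤ |P|`, and its head,
root, run end offset, full run end offset, exponent, tail and type all equal the
corresponding quantities of position `j` in `T`. -/
theorem partially_periodic_substring {α : Type*} [LinearOrder α] (τ n : ℕ) (T : ℕ → α)
    (hτ : 1 ≤ τ) (hn : 2 * τ ≤ n)
    (hlast : ∀ i, 1 ≤ i → i < n → T i ≠ T n)
    (j ℓ : ℕ) (hj : j ∈ Rset τ n T) (hℓ : 0 < ℓ)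
    (h1 : runEndT τ n T j < j + ℓ) (h2 : j + ℓ ≤ n + 1) :
    IsPeriodicPat τ (sufP T j) ℓ ∧
    runendP τ (sufP T j) ℓ ≤ ℓ ∧
    headP τ (sufP T j) = headT τ T j ∧
    rootP τ (sufP T j) = rootT τ T j ∧
    runendP τ (sufP T j) ℓ - 1 = runEndT τ n T j - j ∧
    runendfullP τ (sufP T j) ℓ - 1 = runEndFullT τ n T j - j ∧
    expP τ (sufP T j) ℓ = expT τ n T j ∧
    tailP τ (sufP T j) ℓ = tailT τ n T j ∧
    (typePosP τ (sufP T j) ℓ ↔ typePosT τ n T j) := by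
  obtain ⟨hj1, hj2, hj3⟩ := hj
  have hpne : {q | 0 < q ∧ ∀ t, t + q < 3*τ-1 → (sufP T j) (1+t) = (sufP T j) (1+t+q)}.Nonempty :=
    ⟨3*τ-1, by omega, fun t ht => absurd ht (by omega)⟩
  have hp_mem := Nat.sInf_mem hpne
  have hpdef : perP (sufP T j) (3*τ-1) = sInf {q | 0 < q ∧ ∀ t, t + q < 3*τ-1 →
      (sufP T j) (1+t) = (sufP T j) (1+t+q)} := rfl
  rw [← hpdef] at hp_mem
  set p := perP (sufP T j) (3*τ-1) with hpd
  have hp_pos : 0 < p := hp_mem.1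
  have hper := hp_mem.2
  set S : ℕ → Set ℕ := fun m => {x | p + x ≤ m ∧ ∀ t < x, (sufP T j) (1+t) = (sufP T j) (1+p+t)}
    with hSdef
  have hSm : ∀ m x, x ∈ S m ↔ p + x ≤ m ∧ ∀ t < x, (sufP T j) (1+t) = (sufP T j) (1+p+t) :=
    fun m x => Iff.rfl
  have hbdd : ∀ m, BddAbove (S m) :=
    fun m => ⟨m, fun x hx => le_trans (Nat.le_add_left x p) hx.1⟩
  have hre : ∀ m, runendP τ (sufP T j) m = 1 + p + sSup (S m) := fun m => rfl
  have hbase : (3*τ-1-p) ∈ S (n+1-j) := by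
    refine ⟨by omega, fun t ht => ?_⟩
    have h := hper t (by omega)
    have e : 1 + t + p = 1 + p + t := by omega
    rw [e] at h
    exact h
  have hLmem : sSup (S (n+1-j)) ∈ S (n+1-j) := Nat.sSup_mem ⟨_, hbase⟩ (hbdd _)
  have hLge : 3*τ-1-p ≤ sSup (S (n+1-j)) := le_csSup (hbdd _) hbase
  have e1 : runEndT τ n T j = j + (1 + p + sSup (S (n+1-j))) - 1 := by
    show j + runendP τ (sufP T j) (n+1-j) - 1 = _
    rw [hre]
  rw [e1] at h1
  have h1' : p + sSup (S (n+1-j)) < ℓ := by omega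
  have h3le : 3*τ-1 ≤ ℓ := by omega
  have hmemℓ : sSup (S (n+1-j)) ∈ S ℓ := ⟨by omega, hLmem.2⟩
  have hsupeq : sSup (S ℓ) = sSup (S (n+1-j)) := by
    refine le_antisymm (csSup_le_csSup (hbdd _) ⟨_, hmemℓ⟩ ?_) (le_csSup (hbdd _) hmemℓ)
    intro x hx
    exact ⟨le_trans hx.1 (by omega), hx.2⟩
  have hreq : runendP τ (sufP T j) ℓ = runendP τ (sufP T j) (n+1-j) := by
    rw [hre, hre, hsupeq]
  have hb1 : runendP τ (sufP T j) ℓ ≤ ℓ := by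
    rw [hre, hsupeq]; omega
  have hb2 : runendP τ (sufP T j) (n+1-j) ≤ n+1-j := by
    rw [hre]; omega
  have htaileq : tailP τ (sufP T j) ℓ = tailP τ (sufP T j) (n+1-j) := by
    unfold tailP
    rw [hreq]
  have htail_le : tailP τ (sufP T j) (n+1-j) ≤ runendP τ (sufP T j) (n+1-j) - 1 := by
    unfold tailP
    exact le_trans (Nat.mod_le _ _) (Nat.sub_le _ _)
  refine ⟨⟨h3le, hj3⟩, hb1, rfl, rfl, ?_, ?_, ?_, ?_, ?_⟩
  · show runendP τ (sufP T j) ℓ - 1 = j + runendP τ (sufP T j) (n+1-j) - 1 - j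
    rw [hreq, hre]
    omega
  · show runendfullP τ (sufP T j) ℓ - 1 = j + runendfullP τ (sufP T j) (n+1-j) - 1 - j
    unfold runendfullP
    rw [hreq, htaileq]
    rw [hre] at htail_le ⊢
    omega
  · show expP τ (sufP T j) ℓ = expP τ (sufP T j) (n+1-j)
    unfold expP
    rw [hreq]
  · exact htaileq
  · constructor
    · intro h
      exact ⟨hb2, by rw [← hreq]; exact h.2⟩
    · intro h
      exact ⟨hb1, by rw [hreq]; exact h.2⟩
end

section
/- Let τ ∈ [1..⌊n/2⌋], let j ∈ R(τ,T), and let ℓ ≥ 3τ - 1 be such that j + ℓ ≤ e(j). Then P := T[j..j+ℓ) is a τ-periodic pattern satisfying runend(P) = |P| + 1 (P is fully periodic), and head(P) = head_T(j) and root(P) = root_T(j). -/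
open LZ in
/-- Let `τ ∈ [1..⌊n/2⌋]`, `j ∈ R(τ,T)`, and `ℓ ≥ 3τ - 1` with
`j + ℓ ≤ e(j)`. Then `P := T[j..j+ℓ)` is a `τ`-periodic pattern with
`runend(P) = |P| + 1` (fully periodic), and `head(P) = head_T(j)` and
`root(P) = root_T(j)`. -/
theorem fully_periodic_substring {α : Type*} [LinearOrder α] (τ n : ℕ) (T : ℕ → α)
    (hτ : 1 ≤ τ) (hn : 2 * τ ≤ n)
    (j ℓ : ℕ) (hj : j ∈ Rset τ n T) (hℓ : 3 * τ - 1 ≤ ℓ)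
    (h1 : j + ℓ ≤ runEndT τ n T j) :
    IsPeriodicPat τ (sufP T j) ℓ ∧
    runendP τ (sufP T j) ℓ = ℓ + 1 ∧
    headP τ (sufP T j) = headT τ T j ∧
    rootP τ (sufP T j) = rootT τ T j := by
  obtain ⟨hj1, hj2, hj3⟩ := hj
  set P : ℕ → α := sufP T j with hP
  set p : ℕ := perP P (3 * τ - 1) with hp
  -- p is positive
  have hp_pos : 0 < p := by
    have hne : {q | 0 < q ∧ ∀ t, t + q < 3 * τ - 1 → P (1 + t) = P (1 + t + q)}.Nonempty := by
      refine ⟨3 * τ - 1, by omega, fun t ht => absurd ht (by omega)⟩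
    have := Nat.sInf_mem hne
    exact this.1
  have hpτ : 3 * p ≤ τ := hj3
  have hpℓ : p ≤ ℓ := by omega
  -- the big lcp set
  set SBig : Set ℕ := {ℓ' | p + ℓ' ≤ n + 1 - j ∧ ∀ t < ℓ', P (1 + t) = P (1 + p + t)} with hSBig
  have hSBig_ne : SBig.Nonempty := ⟨0, by omega, fun t ht => absurd ht (by omega)⟩
  have hSBig_bdd : BddAbove SBig := ⟨n + 1 - j, fun x hx => by
    have := hx.1; omega⟩
  set L : ℕ := sSup SBig with hL
  have hLmem : L ∈ SBig := Nat.sSup_mem hSBig_ne hSBig_bdd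
  -- h1 gives ℓ ≤ p + L
  have hℓpL : ℓ ≤ p + L := by
    have hre : runEndT τ n T j = j + (1 + p + L) - 1 := rfl
    rw [hre] at h1
    omega
  -- the small lcp set equals Iic (ℓ - p)
  have hset : {ℓ' | p + ℓ' ≤ ℓ ∧ ∀ t < ℓ', P (1 + t) = P (1 + p + t)} = Set.Iic (ℓ - p) := by
    ext x
    constructor
    · rintro ⟨hx1, -⟩
      simp only [Set.mem_Iic]
      omega
    · intro hx
      simp only [Set.mem_Iic] at hx
      refine ⟨by omega, fun t ht => hLmem.2 t (by omega)⟩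
  have hrun : runendP τ P ℓ = ℓ + 1 := by
    unfold runendP
    rw [← hp, hset, csSup_Iic]
    omega
  exact ⟨⟨hℓ, hj3⟩, hrun, rfl, rfl⟩
end
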